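/- arXiv:2108.01580 — 6 statements merged into one kernel-verified Lean document; each statement's English description precedes it below -/
import Mathlib

section
/- Let A_1, …, A_k be finite abelian groups and let φ : A_1 × ⋯ × A_k → ℝ/ℤ be a multilinear map which is nontrivial (not identically zero). Then for each index i ∈ {1,…,k}, bias(φ) ≤ 1 − ∏_{j ≠ i} (1 − 1/p_j), where p_j denotes the smallest prime divisor of |A_j| (note that nontriviality of φ forces each A_j to be nontrivial). -/
open scoped ComplexOrder

/-- A map of (dependent) products of abelian groups is multiadditive (multilinear over ℤ)
if it is additive in each coordinate separately. -/
def IsMultiadditive {ι : Type} [DecidableEq ι] {A : ι → Type} [∀ i, AddCommGroup (A i)]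
    {B : Type} [AddCommMonoid B] (φ : (∀ i, A i) → B) : Prop :=
  ∀ (i : ι) (x : ∀ j, A j) (a b : A i),
    φ (Function.update x i (a + b)) = φ (Function.update x i a) + φ (Function.update x i b)

/-- The standard character `e(x) = exp(2πix)` of `ℝ/ℤ`. -/
noncomputable def eChar (x : AddCircle (1 : ℝ)) : ℂ := AddCircle.toCircle x

/-- The bias of a map `A_1 × ⋯ × A_k → ℝ/ℤ`. -/
noncomputable def bias {ι : Type} [Fintype ι] [DecidableEq ι] {A : ι → Type}
    [∀ i, Fintype (A i)] (φ : (∀ i, A i) → AddCircle (1 : ℝ)) : ℂ :=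
  (∑ x : ∀ i, A i, eChar (φ x)) / (Fintype.card (∀ i, A i) : ℂ)

/-- The bilinear map `m_q : ℤ/q × ℤ/q → ℝ/ℤ`, `(x, y) ↦ xy/q mod 1`. -/
noncomputable def mq (q : ℕ) (x y : ZMod q) : AddCircle (1 : ℝ) :=
  (((x.val * y.val : ℕ) : ℝ) / q : ℝ)

/-- A multilinear map `φ : A_1 × ⋯ × A_k → ℝ/ℤ` factors through `m_q` if
`φ(x) = m_q(φ₁(x_I), φ₂(x_{I^c}))` for some `I` with `0 < |I| < k` and multilinear `φ₁, φ₂`. -/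
def FactorsThroughMq {ι : Type} [Fintype ι] [DecidableEq ι] {A : ι → Type}
    [∀ i, AddCommGroup (A i)] (q : ℕ) (φ : (∀ i, A i) → AddCircle (1 : ℝ)) : Prop :=
  ∃ I : Finset ι, I.Nonempty ∧ I ≠ Finset.univ ∧
    ∃ (φ₁ : (∀ i : I, A i) → ZMod q) (φ₂ : (∀ i : (Iᶜ : Finset ι), A i) → ZMod q),
      IsMultiadditive φ₁ ∧ IsMultiadditive φ₂ ∧
      ∀ x : ∀ i, A i, φ x = mq q (φ₁ (fun i => x i)) (φ₂ (fun i => x i))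

section Aux

variable {ι : Type} [DecidableEq ι] {A : ι → Type} [∀ i, AddCommGroup (A i)]
  {B : Type} [AddCommGroup B]

lemma piSplitAt_symm_update_left (j0 : ι) (y' : ∀ j : {j // j ≠ j0}, A j) (a b : A j0) :
    (Equiv.piSplitAt j0 A).symm (a, y')
      = Function.update ((Equiv.piSplitAt j0 A).symm (b, y')) j0 a := by
  funext j
  rcases eq_or_ne j j0 with rfl | h
  · simp [Equiv.piSplitAt_symm_apply]
  · simp [Equiv.piSplitAt_symm_apply, h, Function.update_of_ne h]

lemma piSplitAt_symm_update_right (j0 : ι) (y' : ∀ j : {j // j ≠ j0}, A j) (a : A j0)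
    (j : {j // j ≠ j0}) (c : A j) :
    (Equiv.piSplitAt j0 A).symm (a, Function.update y' j c)
      = Function.update ((Equiv.piSplitAt j0 A).symm (a, y')) j.val c := by
  funext j'
  rcases eq_or_ne j' j0 with rfl | h
  · rw [Function.update_of_ne (Ne.symm j.2)]
    simp [Equiv.piSplitAt_symm_apply]
  · rcases eq_or_ne j' j.val with h2 | h2
    · subst h2
      simp [Equiv.piSplitAt_symm_apply, j.2, Subtype.coe_eta]
    · have hne : (⟨j', h⟩ : {j // j ≠ j0}) ≠ j := fun hh => h2 (congrArg Subtype.val hh)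
      simp [Equiv.piSplitAt_symm_apply, h, Function.update_of_ne h2, Function.update_of_ne hne]

noncomputable def resHom (j0 : ι) (ψ : (∀ i, A i) → B) (hψ : IsMultiadditive ψ)
    (y' : ∀ j : {j // j ≠ j0}, A j) : A j0 →+ B :=
  AddMonoidHom.mk' (fun a => ψ ((Equiv.piSplitAt j0 A).symm (a, y'))) (by
    intro a b
    show ψ ((Equiv.piSplitAt j0 A).symm (a + b, y'))
      = ψ ((Equiv.piSplitAt j0 A).symm (a, y')) + ψ ((Equiv.piSplitAt j0 A).symm (b, y'))
    rw [piSplitAt_symm_update_left j0 y' (a + b) 0, piSplitAt_symm_update_left j0 y' a 0,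
      piSplitAt_symm_update_left j0 y' b 0]
    exact hψ j0 _ a b)

lemma res_spec (j0 : ι) (ψ : (∀ i, A i) → B) (hψ : IsMultiadditive ψ) (y : ∀ i, A i) :
    resHom j0 ψ hψ (fun j => y j.val) (y j0) = ψ y :=
  congrArg ψ ((Equiv.piSplitAt j0 A).symm_apply_apply y)

lemma resHom_multiadditive (j0 : ι) (ψ : (∀ i, A i) → B) (hψ : IsMultiadditive ψ) :
    IsMultiadditive (fun y' => resHom j0 ψ hψ y') := by
  intro j x a b
  ext a0
  show ψ ((Equiv.piSplitAt j0 A).symm (a0, Function.update x j (a + b)))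
    = ψ ((Equiv.piSplitAt j0 A).symm (a0, Function.update x j a))
      + ψ ((Equiv.piSplitAt j0 A).symm (a0, Function.update x j b))
  rw [piSplitAt_symm_update_right, piSplitAt_symm_update_right, piSplitAt_symm_update_right]
  exact hψ j.val _ a b

lemma hom_count {G : Type} [AddCommGroup G] [Fintype G] (h : G →+ B) (hne : h ≠ 0) :
    (1 - 1 / ((Fintype.card G).minFac : ℝ)) * (Fintype.card G : ℝ)
      ≤ (Nat.card {a : G // h a ≠ 0} : ℝ) := by
  classical
  set K := Finset.univ.filter (fun a => h a = 0) with hK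
  have hKdvd : K.card ∣ Fintype.card G := by
    have h1 : Nat.card h.ker ∣ Nat.card G := AddSubgroup.card_addSubgroup_dvd_card _
    have h2 : Nat.card h.ker = K.card := by
      rw [Nat.card_congr (Equiv.subtypeEquivRight (fun x => h.mem_ker)),
        Nat.card_eq_fintype_card, Fintype.card_subtype]
    rwa [h2, Nat.card_eq_fintype_card] at h1
  have hK0 : 0 < K.card := Finset.card_pos.mpr ⟨0, by simp [hK]⟩
  obtain ⟨d, hmul⟩ := hKdvd
  have hd_dvd : d ∣ Fintype.card G := ⟨K.card, by rw [hmul]; ring⟩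
  have hd1 : d ≠ 1 := by
    intro h1
    rw [h1, mul_one] at hmul
    have hKu : K = Finset.univ := Finset.eq_univ_of_card K hmul.symm
    apply hne
    ext a
    have : a ∈ K := hKu ▸ Finset.mem_univ a
    simpa [hK] using (Finset.mem_filter.mp this).2
  have hd0 : d ≠ 0 := by
    intro h0; rw [h0, mul_zero] at hmul
    have := Fintype.card_pos (α := G); omega
  have hmin : (Fintype.card G).minFac ≤ d :=
    Nat.minFac_le_of_dvd ((Nat.two_le_iff d).mpr ⟨hd0, hd1⟩) hd_dvd
  have hkey : K.card * (Fintype.card G).minFac ≤ Fintype.card G := by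
    calc K.card * (Fintype.card G).minFac ≤ K.card * d := Nat.mul_le_mul_left _ hmin
    _ = Fintype.card G := hmul.symm
  -- now in ℝ
  have hNcard : Nat.card {a : G // h a ≠ 0} = Fintype.card G - K.card := by
    rw [Nat.card_eq_fintype_card, Fintype.card_subtype]
    have h3 := Finset.card_filter_add_card_filter_not (s := (Finset.univ : Finset G))
      (p := fun a : G => h a = 0)
    rw [Finset.card_univ] at h3
    simp only [ne_eq] at h3 ⊢
    rw [hK]
    omega
  have hKle : K.card ≤ Fintype.card G := by
    calc K.card = (Finset.univ.filter (fun a => h a = 0)).card := rfl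
    _ ≤ Finset.univ.card := Finset.card_filter_le _ _
    _ = Fintype.card G := Finset.card_univ
  have hp : (0:ℝ) < ((Fintype.card G).minFac : ℝ) := by
    exact_mod_cast (Fintype.card G).minFac_pos
  have hreal : (K.card : ℝ) ≤ (Fintype.card G : ℝ) / ((Fintype.card G).minFac : ℝ) := by
    rw [le_div_iff₀ hp]
    exact_mod_cast hkey
  have hcast : (Nat.card {a : G // h a ≠ 0} : ℝ) = (Fintype.card G : ℝ) - K.card := by
    rw [hNcard, Nat.cast_sub hKle]
  rw [hcast]
  have : (1 - 1 / ((Fintype.card G).minFac : ℝ)) * (Fintype.card G : ℝ)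
      = (Fintype.card G : ℝ) - (Fintype.card G : ℝ) / ((Fintype.card G).minFac : ℝ) := by
    field_simp
  rw [this]
  linarith

end Aux

lemma count_ge :
    ∀ (n : ℕ) (ι : Type) [Fintype ι] [DecidableEq ι] (A : ι → Type)
      [∀ i, AddCommGroup (A i)] [∀ i, Fintype (A i)] (B : Type) [AddCommGroup B]
      (ψ : (∀ i, A i) → B), Fintype.card ι = n → IsMultiadditive ψ → (∃ y, ψ y ≠ 0) →
      ∏ j : ι, ((1 - 1 / ((Fintype.card (A j)).minFac : ℝ)) * (Fintype.card (A j) : ℝ))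
        ≤ (Nat.card {y : ∀ i, A i // ψ y ≠ 0} : ℝ) := by
  intro n
  induction n with
  | zero =>
    intro ι _ _ A _ _ B _ ψ hc hψ hnt
    obtain ⟨y0, hy0⟩ := hnt
    have hempty : IsEmpty ι := Fintype.card_eq_zero_iff.mp hc
    rw [Finset.univ_eq_empty, Finset.prod_empty]
    have : Nonempty {y : ∀ i, A i // ψ y ≠ 0} := ⟨⟨y0, hy0⟩⟩
    have : Finite {y : ∀ i, A i // ψ y ≠ 0} := Subtype.finite
    have h1 : 0 < Nat.card {y : ∀ i, A i // ψ y ≠ 0} := Nat.card_pos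
    exact_mod_cast h1
  | succ n ih =>
    intro ι _ _ A _ _ B _ ψ hc hψ hnt
    classical
    obtain ⟨y0, hy0⟩ := hnt
    have hne : Nonempty ι := Fintype.card_pos_iff.mp (by omega)
    obtain ⟨j0⟩ := hne
    set ψ' : (∀ j : {j // j ≠ j0}, A j.val) → (A j0 →+ B) := fun y' => resHom j0 ψ hψ y'
      with hψ'def
    have hψ' : IsMultiadditive ψ' := resHom_multiadditive j0 ψ hψ
    have hcard' : Fintype.card {j : ι // j ≠ j0} = n := by
      have h1 : Fintype.card {j : ι // j ≠ j0}
          = Fintype.card ι - Fintype.card {j : ι // j = j0} :=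
        Fintype.card_subtype_compl _
      rw [Fintype.card_subtype_eq] at h1
      omega
    have hnt' : ∃ y', ψ' y' ≠ 0 := by
      refine ⟨fun j => y0 j.val, fun h0 => hy0 ?_⟩
      rw [← res_spec j0 ψ hψ y0]
      show ψ' (fun j => y0 j.val) (y0 j0) = 0
      rw [h0]
      rfl
    have hIH := ih {j : ι // j ≠ j0} (fun j => A j.val) (A j0 →+ B) ψ' hcard' hψ' hnt'
    -- counting identity
    have hcount : Nat.card {y : ∀ i, A i // ψ y ≠ 0}
        = ∑ y' : (∀ j : {j : ι // j ≠ j0}, A j.val), Nat.card {a : A j0 // ψ' y' a ≠ 0} := by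
      have e1 : {y : ∀ i, A i // ψ y ≠ 0}
          ≃ Σ y' : (∀ j : {j : ι // j ≠ j0}, A j.val), {a : A j0 // ψ' y' a ≠ 0} := by
        have e2 : {y : ∀ i, A i // ψ y ≠ 0}
            ≃ {p : A j0 × (∀ j : {j : ι // j ≠ j0}, A j.val) // ψ' p.2 p.1 ≠ 0} := by
          refine Equiv.subtypeEquiv (Equiv.piSplitAt j0 A) ?_
          intro y
          have hres := res_spec j0 ψ hψ y
          constructor
          · intro hy hcontra
            exact hy (hres.symm.trans hcontra)
          · intro hy hcontra
            exact hy (hres.trans hcontra)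
        have e3 : {p : A j0 × (∀ j : {j : ι // j ≠ j0}, A j.val) // ψ' p.2 p.1 ≠ 0}
            ≃ {q : (∀ j : {j : ι // j ≠ j0}, A j.val) × A j0 // ψ' q.1 q.2 ≠ 0} :=
          Equiv.subtypeEquiv (Equiv.prodComm _ _) (fun p => Iff.rfl)
        exact e2.trans (e3.trans (Equiv.subtypeProdEquivSigmaSubtype (fun y' a => ψ' y' a ≠ 0)))
      rw [Nat.card_congr e1, Nat.card_eq_fintype_card, Fintype.card_sigma]
      exact Finset.sum_congr rfl (fun y' _ => (Nat.card_eq_fintype_card).symm)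
    set f : ι → ℝ := fun j => (1 - 1 / ((Fintype.card (A j)).minFac : ℝ)) * (Fintype.card (A j) : ℝ)
      with hf
    have hf_nonneg : ∀ j, 0 ≤ f j := by
      intro j
      apply mul_nonneg _ (Nat.cast_nonneg _)
      have h1 : (1:ℝ) ≤ ((Fintype.card (A j)).minFac : ℝ) := by
        exact_mod_cast (Fintype.card (A j)).minFac_pos
      have : 1 / ((Fintype.card (A j)).minFac : ℝ) ≤ 1 :=
        div_le_one_of_le₀ h1 (by linarith)
      linarith
    have hprod : ∏ j : ι, f j = f j0 * ∏ j : {j : ι // j ≠ j0}, f j.val := by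
      rw [← Finset.mul_prod_erase Finset.univ f (Finset.mem_univ j0)]
      congr 1
      exact Finset.prod_subtype _ (by simp) f
    have hS : ((Finset.univ.filter (fun y' => ψ' y' ≠ 0)).card : ℝ)
        = (Nat.card {y' // ψ' y' ≠ 0} : ℝ) := by
      rw [Nat.card_eq_fintype_card, Fintype.card_subtype]
    have hterm : ∀ y' ∈ Finset.univ.filter (fun y' => ψ' y' ≠ 0),
        f j0 ≤ (Nat.card {a : A j0 // ψ' y' a ≠ 0} : ℝ) := by
      intro y' hy'
      exact hom_count (ψ' y') (Finset.mem_filter.mp hy').2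
    calc ∏ j : ι, f j = f j0 * ∏ j : {j : ι // j ≠ j0}, f j.val := hprod
      _ ≤ f j0 * (Nat.card {y' // ψ' y' ≠ 0} : ℝ) :=
          mul_le_mul_of_nonneg_left hIH (hf_nonneg j0)
      _ = ((Finset.univ.filter (fun y' => ψ' y' ≠ 0)).card : ℝ) * f j0 := by rw [hS]; ring
      _ ≤ ∑ y' ∈ Finset.univ.filter (fun y' => ψ' y' ≠ 0),
            (Nat.card {a : A j0 // ψ' y' a ≠ 0} : ℝ) := by
          have := Finset.card_nsmul_le_sum (Finset.univ.filter (fun y' => ψ' y' ≠ 0))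
            (fun y' => (Nat.card {a : A j0 // ψ' y' a ≠ 0} : ℝ)) (f j0) hterm
          simpa [nsmul_eq_mul] using this
      _ ≤ ∑ y' : (∀ j : {j : ι // j ≠ j0}, A j.val),
            (Nat.card {a : A j0 // ψ' y' a ≠ 0} : ℝ) :=
          Finset.sum_le_sum_of_subset_of_nonneg (Finset.filter_subset _ _)
            (fun _ _ _ => Nat.cast_nonneg _)
      _ = (Nat.card {y : ∀ i, A i // ψ y ≠ 0} : ℝ) := by rw [hcount]; push_cast; rfl

lemma charSum {G : Type} [AddCommGroup G] [Fintype G] (h : G →+ AddCircle (1:ℝ)) :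
    ∑ a, eChar (h a) = if h = 0 then (Fintype.card G : ℂ) else 0 := by
  classical
  let χ : AddChar G ℂ :=
    { toFun := fun a => eChar (h a)
      map_zero_eq_one' := by simp [eChar, map_zero]
      map_add_eq_mul' := by
        intro a b
        simp [eChar, map_add, AddCircle.toCircle_add] }
  have h0 : χ = 0 ↔ h = 0 := by
    rw [AddChar.eq_zero_iff]
    constructor
    · intro hall
      ext a
      have h1 : (AddCircle.toCircle (h a) : ℂ) = 1 := hall a
      have h2 : AddCircle.toCircle (h a) = 1 := Circle.coe_injective (by simpa using h1)
      have h3 := AddCircle.injective_toCircle (one_ne_zero (α := ℝ))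
        (h2.trans (AddCircle.toCircle_zero).symm)
      simpa using h3
    · intro hh x
      simp [χ, eChar, hh]
  calc ∑ a, eChar (h a) = ∑ a, χ a := rfl
    _ = if χ = 0 then ((Fintype.card G : ℕ) : ℂ) else 0 := AddChar.sum_eq_ite χ
    _ = if h = 0 then (Fintype.card G : ℂ) else 0 := by simp [h0]

/-- If `A_1, …, A_k` are finite abelian groups and `φ : A_1 × ⋯ × A_k → ℝ/ℤ` is a nontrivial
multilinear map then for each `i`, `bias(φ) ≤ 1 − ∏_{j ≠ i} (1 − 1/p_j)`, where `p_j` is the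
smallest prime divisor of `|A_j|`. -/
theorem bias_le_one_sub_prod (k : ℕ) (A : Fin k → Type) [∀ i, AddCommGroup (A i)]
    [∀ i, Fintype (A i)] (φ : (∀ i, A i) → AddCircle (1 : ℝ)) (hφ : IsMultiadditive φ)
    (hnt : ∃ x, φ x ≠ 0) (i : Fin k) :
    bias φ ≤
      ((1 - ∏ j ∈ Finset.univ.erase i, (1 - 1 / ((Fintype.card (A j)).minFac : ℝ)) : ℝ) : ℂ) := by
  classical
  obtain ⟨x0, hx0⟩ := hnt
  set h : (∀ j : {j : Fin k // j ≠ i}, A j.val) → (A i →+ AddCircle (1:ℝ)) :=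
    fun y' => resHom i φ hφ y' with hhdef
  have hnt' : ∃ y', h y' ≠ 0 := by
    refine ⟨fun j => x0 j.val, fun h0 => hx0 ?_⟩
    rw [← res_spec i φ hφ x0]
    show h (fun j => x0 j.val) (x0 i) = 0
    rw [h0]; rfl
  set Z := (Finset.univ.filter
    (fun y' : ∀ j : {j : Fin k // j ≠ i}, A j.val => h y' = 0)).card with hZ
  set N := (Finset.univ.filter
    (fun y' : ∀ j : {j : Fin k // j ≠ i}, A j.val => h y' ≠ 0)).card with hN
  set M := Fintype.card (∀ j : {j : Fin k // j ≠ i}, A j.val) with hM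
  have hsum : ∑ x : ∀ j, A j, eChar (φ x) = (Fintype.card (A i) : ℂ) * Z := by
    calc ∑ x : ∀ j, A j, eChar (φ x)
        = ∑ p : (A i) × (∀ j : {j : Fin k // j ≠ i}, A j.val), eChar (h p.2 p.1) := by
          refine Fintype.sum_equiv (Equiv.piSplitAt i A) _ _ (fun x => ?_)
          exact congrArg eChar (res_spec i φ hφ x).symm
      _ = ∑ a : A i, ∑ y', eChar (h y' a) := Fintype.sum_prod_type _
      _ = ∑ y', ∑ a : A i, eChar (h y' a) := Finset.sum_comm
      _ = ∑ y', if h y' = 0 then (Fintype.card (A i) : ℂ) else 0 :=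
          Finset.sum_congr rfl (fun y' _ => charSum (h y'))
      _ = (Fintype.card (A i) : ℂ) * Z := by
          rw [Finset.sum_ite, Finset.sum_const, Finset.sum_const_zero, add_zero, nsmul_eq_mul]
          rw [hZ]; ring
  have hcard : Fintype.card (∀ j, A j) = Fintype.card (A i) * M := by
    rw [Fintype.card_congr (Equiv.piSplitAt i A), Fintype.card_prod, hM]
  have hAine0 : (Fintype.card (A i) : ℂ) ≠ 0 := Nat.cast_ne_zero.mpr Fintype.card_ne_zero
  have hbias : bias φ = (((Z : ℝ) / (M : ℝ) : ℝ) : ℂ) := by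
    rw [bias, hsum, hcard]
    push_cast
    rw [mul_div_mul_left _ _ hAine0]
  rw [hbias, Complex.real_le_real]
  -- now a real inequality
  have hZN : Z + N = M := by
    have h3 := Finset.card_filter_add_card_filter_not (s := Finset.univ)
      (p := fun y' : ∀ j : {j : Fin k // j ≠ i}, A j.val => h y' = 0)
    rw [Finset.card_univ] at h3
    simp only [ne_eq] at h3 ⊢
    rw [hZ, hN, hM]
    simpa using h3
  have hcount := count_ge (Fintype.card {j : Fin k // j ≠ i}) {j : Fin k // j ≠ i}
    (fun j => A j.val) (A i →+ AddCircle (1:ℝ)) h rfl (resHom_multiadditive i φ hφ) hnt'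
  have hNge : (N : ℝ) = (Nat.card {y' // h y' ≠ 0} : ℝ) := by
    rw [Nat.card_eq_fintype_card, Fintype.card_subtype, hN]
  rw [← hNge] at hcount
  have hMprod : (M : ℝ) = ∏ j : {j : Fin k // j ≠ i}, (Fintype.card (A j.val) : ℝ) := by
    rw [hM, Fintype.card_pi]
    push_cast
    rfl
  have hQ : ∏ j ∈ Finset.univ.erase i, (1 - 1 / ((Fintype.card (A j)).minFac : ℝ))
      = ∏ j : {j : Fin k // j ≠ i}, (1 - 1 / ((Fintype.card (A j.val)).minFac : ℝ)) :=
    Finset.prod_subtype _ (by simp) _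
  have hsplit : ∏ j : {j : Fin k // j ≠ i},
      ((1 - 1 / ((Fintype.card (A j.val)).minFac : ℝ)) * (Fintype.card (A j.val) : ℝ))
      = (∏ j : {j : Fin k // j ≠ i}, (1 - 1 / ((Fintype.card (A j.val)).minFac : ℝ))) * (M : ℝ) := by
    rw [Finset.prod_mul_distrib, hMprod]
  have hMpos : (0:ℝ) < M := by
    rw [hM]
    exact_mod_cast Fintype.card_pos
  set Q : ℝ := ∏ j : {j : Fin k // j ≠ i}, (1 - 1 / ((Fintype.card (A j.val)).minFac : ℝ)) with hQ'
  rw [hQ]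
  have hQM : Q * M ≤ (N : ℝ) := by
    rw [← hsplit]
    exact hcount
  have hQle : Q ≤ (N : ℝ) / (M : ℝ) := (le_div_iff₀ hMpos).mpr hQM
  have hZr : (Z : ℝ) = (M : ℝ) - N := by
    have : (Z : ℝ) + N = M := by exact_mod_cast hZN
    linarith
  rw [hZr, sub_div, div_self (ne_of_gt hMpos)]
  linarith
end

section
/- Let A_1, …, A_k be finite abelian groups and let φ, ψ : A_1 × ⋯ × A_k → ℝ/ℤ be multilinear maps. Then bias(φ + ψ) ≥ bias(φ) · bias(ψ). -/
open scoped ComplexOrder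

section BiasAux

open Finset
open scoped Classical

lemma eChar_zero' : eChar 0 = 1 := by
  simp [eChar]

lemma eChar_add' (x y : AddCircle (1 : ℝ)) : eChar (x + y) = eChar x * eChar y := by
  simp [eChar, AddCircle.toCircle_add]

/-- Character orthogonality: the sum of an additive character is `|G|` or `0`. -/
lemma sum_eChar_additive {G : Type} [AddCommGroup G] [Fintype G]
    (f : G → AddCircle (1 : ℝ)) (hf : ∀ a b : G, f (a + b) = f a + f b) :
    ∑ a : G, eChar (f a) = if ∀ a, f a = 0 then (Fintype.card G : ℂ) else 0 := by
  split_ifs with h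
  · rw [Finset.sum_congr rfl fun a _ => by rw [h a, eChar_zero']]
    simp
  · push_neg at h
    obtain ⟨b, hb⟩ := h
    have h1 : eChar (f b) ≠ 1 := by
      intro h1
      apply hb
      apply AddCircle.injective_toCircle (one_ne_zero : (1:ℝ) ≠ 0)
      rw [AddCircle.toCircle_zero]
      apply Circle.coe_injective
      rw [Circle.coe_one]
      exact h1
    have key : eChar (f b) * ∑ a : G, eChar (f a) = ∑ a : G, eChar (f a) := by
      rw [Finset.mul_sum]
      calc ∑ a : G, eChar (f b) * eChar (f a)
          = ∑ a : G, eChar (f (a + b)) := by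
            refine Finset.sum_congr rfl fun a _ => ?_
            rw [hf, eChar_add', mul_comm]
        _ = ∑ a : G, eChar (f a) :=
            Fintype.sum_equiv (Equiv.addRight b) _ _ (fun a => rfl)
    have h2 : (eChar (f b) - 1) * ∑ a : G, eChar (f a) = 0 := by
      rw [sub_mul, one_mul, key, sub_self]
    rcases mul_eq_zero.mp h2 with h3 | h3
    · exact absurd (sub_eq_zero.mp h3) h1
    · exact h3

/-- The number of zeros of a map. -/
noncomputable def Zc {X : Type} [Fintype X] {H : Type} [Zero H] (γ : X → H) : ℕ :=
  ∑ x : X, if γ x = 0 then 1 else 0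

/-- Zero sets of two additive maps on a finite abelian group are nonnegatively
correlated (kernels are subgroups). -/
lemma hom_count_s7 {G H : Type} [AddCommGroup G] [Fintype G] [AddCommGroup H]
    (f g : G → H) (hf : ∀ a b, f (a + b) = f a + f b) (hg : ∀ a b, g (a + b) = g a + g b) :
    (∑ a : G, if f a = 0 then 1 else 0) * (∑ a : G, if g a = 0 then 1 else 0) ≤
      Fintype.card G * ∑ a : G, (if f a = 0 then 1 else 0) * (if g a = 0 then 1 else 0) := by
  have zf : f 0 = 0 := by
    have h := hf 0 0; rw [add_zero] at h; exact (left_eq_add.mp h)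
  have zg : g 0 = 0 := by
    have h := hg 0 0; rw [add_zero] at h; exact (left_eq_add.mp h)
  have nf : ∀ a, f a = 0 → f (-a) = 0 := fun a ha => by
    have h := hf a (-a); rw [add_neg_cancel, zf, ha, zero_add] at h; exact h.symm
  have ng : ∀ a, g a = 0 → g (-a) = 0 := fun a ha => by
    have h := hg a (-a); rw [add_neg_cancel, zg, ha, zero_add] at h; exact h.symm
  let K : AddSubgroup G :=
    { carrier := {a | f a = 0}
      zero_mem' := zf
      add_mem' := by
        intro a b ha hb
        simp only [Set.mem_setOf_eq] at *
        rw [hf, ha, hb, add_zero]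
      neg_mem' := by
        intro a ha
        exact nf a ha }
  let L : AddSubgroup G :=
    { carrier := {a | g a = 0}
      zero_mem' := zg
      add_mem' := by
        intro a b ha hb
        simp only [Set.mem_setOf_eq] at *
        rw [hg, ha, hb, add_zero]
      neg_mem' := by
        intro a ha
        exact ng a ha }
  have cardK : (∑ a : G, if f a = 0 then 1 else 0) = Nat.card K := by
    calc (∑ a : G, if f a = 0 then 1 else 0)
        = Fintype.card {a : G // f a = 0} := by
          rw [Fintype.card_subtype, Finset.card_filter]
      _ = Nat.card {a : G // f a = 0} := Nat.card_eq_fintype_card.symm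
      _ = Nat.card K := Nat.card_congr (Equiv.subtypeEquivRight fun a => Iff.rfl)
  have cardL : (∑ a : G, if g a = 0 then 1 else 0) = Nat.card L := by
    calc (∑ a : G, if g a = 0 then 1 else 0)
        = Fintype.card {a : G // g a = 0} := by
          rw [Fintype.card_subtype, Finset.card_filter]
      _ = Nat.card {a : G // g a = 0} := Nat.card_eq_fintype_card.symm
      _ = Nat.card L := Nat.card_congr (Equiv.subtypeEquivRight fun a => Iff.rfl)
  have cardI : (∑ a : G, (if f a = 0 then 1 else 0) * (if g a = 0 then 1 else 0))
      = Nat.card ↥(K ⊓ L) := by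
    have h1 : ∀ a : G, (if f a = 0 then 1 else 0) * (if g a = 0 then 1 else 0)
        = if (f a = 0 ∧ g a = 0) then 1 else 0 := by
      intro a
      by_cases h1 : f a = 0 <;> by_cases h2 : g a = 0 <;> simp [h1, h2]
    rw [Finset.sum_congr rfl fun a _ => h1 a]
    calc (∑ a : G, if (f a = 0 ∧ g a = 0) then 1 else 0)
        = Fintype.card {a : G // f a = 0 ∧ g a = 0} := by
          rw [Fintype.card_subtype, Finset.card_filter]
      _ = Nat.card {a : G // f a = 0 ∧ g a = 0} := Nat.card_eq_fintype_card.symm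
      _ = Nat.card ↥(K ⊓ L) := Nat.card_congr (Equiv.subtypeEquivRight fun a =>
            ⟨fun h => AddSubgroup.mem_inf.mpr h, fun h => AddSubgroup.mem_inf.mp h⟩)
  rw [cardK, cardL, cardI, ← Nat.card_eq_fintype_card]
  have h1 := AddSubgroup.card_mul_index K
  have h2 := AddSubgroup.card_mul_index L
  have h3 := AddSubgroup.card_mul_index (K ⊓ L)
  have h4 : (K ⊓ L).index ≤ K.index * L.index := AddSubgroup.index_inf_le
  have hK0 : K.index ≠ 0 := AddSubgroup.index_ne_zero_of_finite
  have hL0 : L.index ≠ 0 := AddSubgroup.index_ne_zero_of_finite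
  have key : Nat.card K * Nat.card L * (K.index * L.index)
      ≤ (Nat.card G * Nat.card ↥(K ⊓ L)) * (K.index * L.index) := by
    calc Nat.card K * Nat.card L * (K.index * L.index)
        = (Nat.card K * K.index) * (Nat.card L * L.index) := by ring
      _ = Nat.card G * Nat.card G := by rw [h1, h2]
      _ = (Nat.card ↥(K ⊓ L) * (K ⊓ L).index) * Nat.card G := by rw [h3]
      _ ≤ (Nat.card ↥(K ⊓ L) * (K.index * L.index)) * Nat.card G :=
          Nat.mul_le_mul (Nat.mul_le_mul (le_refl _) h4) (le_refl _)
      _ = (Nat.card G * Nat.card ↥(K ⊓ L)) * (K.index * L.index) := by ring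
  exact Nat.le_of_mul_le_mul_right key (Nat.pos_of_ne_zero (mul_ne_zero hK0 hL0))

section SplitLemmas

variable {ι : Type} [DecidableEq ι] {A : ι → Type} (i₀ : ι)

lemma split_fst (a : A i₀) (y : ∀ j : {j : ι // j ≠ i₀}, A j.val) :
    (Equiv.piSplitAt i₀ A).symm (a, y) i₀ = a :=
  congrArg Prod.fst ((Equiv.piSplitAt i₀ A).apply_symm_apply (a, y))

lemma split_snd (a : A i₀) (y : ∀ j : {j : ι // j ≠ i₀}, A j.val) (j : {j : ι // j ≠ i₀}) :
    (Equiv.piSplitAt i₀ A).symm (a, y) j.val = y j :=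
  congrFun (congrArg Prod.snd ((Equiv.piSplitAt i₀ A).apply_symm_apply (a, y))) j

lemma split_ext {x z : ∀ i, A i} (h1 : x i₀ = z i₀)
    (h2 : ∀ j : {j : ι // j ≠ i₀}, x j.val = z j.val) : x = z := by
  funext j
  rcases eq_or_ne j i₀ with h | h
  · subst h; exact h1
  · exact h2 ⟨j, h⟩

lemma split_update_center (a b : A i₀) (y : ∀ j : {j : ι // j ≠ i₀}, A j.val) :
    Function.update ((Equiv.piSplitAt i₀ A).symm (a, y)) i₀ b
      = (Equiv.piSplitAt i₀ A).symm (b, y) := by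
  apply split_ext i₀
  · rw [Function.update_self, split_fst]
  · intro j
    rw [Function.update_of_ne j.2, split_snd, split_snd]

lemma split_update_off (a : A i₀) (y : ∀ j : {j : ι // j ≠ i₀}, A j.val)
    (j : {j : ι // j ≠ i₀}) (b : A j.val) :
    (Equiv.piSplitAt i₀ A).symm (a, Function.update y j b)
      = Function.update ((Equiv.piSplitAt i₀ A).symm (a, y)) j.val b := by
  apply split_ext i₀
  · rw [split_fst, Function.update_of_ne (Ne.symm j.2), split_fst]
  · intro j'
    rcases eq_or_ne j' j with h | h
    · subst h
      rw [split_snd, Function.update_self, Function.update_self]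
    · rw [split_snd, Function.update_of_ne h,
        Function.update_of_ne (fun hh => h (Subtype.ext hh)), split_snd]

end SplitLemmas

/-- Correlation step: for a family of maps additive in `a`, the zero counts correlate
nonnegatively. -/
lemma corr_count {G' : Type} [AddCommGroup G'] [Fintype G'] {Y Z : Type} [Fintype Y] [Fintype Z]
    {H : Type} [AddCommGroup H]
    (F : G' → Y → H) (Gm : G' → Z → H)
    (hF : ∀ y (a b : G'), F (a + b) y = F a y + F b y)
    (hG : ∀ z (a b : G'), Gm (a + b) z = Gm a z + Gm b z) :
    (∑ a : G', ∑ y : Y, if F a y = 0 then 1 else 0) *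
        (∑ a : G', ∑ z : Z, if Gm a z = 0 then 1 else 0) ≤
      Fintype.card G' * ∑ a : G',
        (∑ y : Y, if F a y = 0 then 1 else 0) * (∑ z : Z, if Gm a z = 0 then 1 else 0) := by
  calc (∑ a : G', ∑ y : Y, if F a y = 0 then 1 else 0) *
        (∑ a : G', ∑ z : Z, if Gm a z = 0 then 1 else 0)
      = (∑ y : Y, ∑ a : G', if F a y = 0 then 1 else 0) *
        (∑ z : Z, ∑ a : G', if Gm a z = 0 then 1 else 0) := by
        exact congrArg₂ (· * ·) Finset.sum_comm Finset.sum_comm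
    _ = ∑ y : Y, ∑ z : Z, (∑ a : G', if F a y = 0 then 1 else 0) *
          (∑ a : G', if Gm a z = 0 then 1 else 0) := Fintype.sum_mul_sum _ _
    _ ≤ ∑ y : Y, ∑ z : Z, Fintype.card G' *
          ∑ a : G', (if F a y = 0 then 1 else 0) * (if Gm a z = 0 then 1 else 0) := by
        refine Finset.sum_le_sum fun y _ => Finset.sum_le_sum fun z _ => ?_
        exact hom_count_s7 (fun a => F a y) (fun a => Gm a z) (hF y) (hG z)
    _ = Fintype.card G' * ∑ y : Y, ∑ z : Z,
          ∑ a : G', (if F a y = 0 then 1 else 0) * (if Gm a z = 0 then 1 else 0) := by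
        simp only [Finset.mul_sum]
    _ = Fintype.card G' * ∑ a : G',
          (∑ y : Y, if F a y = 0 then 1 else 0) * (∑ z : Z, if Gm a z = 0 then 1 else 0) := by
        congr 1
        calc ∑ y : Y, ∑ z : Z, ∑ a : G', (if F a y = 0 then 1 else 0) * (if Gm a z = 0 then 1 else 0)
            = ∑ y : Y, ∑ a : G', ∑ z : Z, (if F a y = 0 then 1 else 0) * (if Gm a z = 0 then 1 else 0) :=
              Finset.sum_congr rfl fun y _ => Finset.sum_comm
          _ = ∑ a : G', ∑ y : Y, ∑ z : Z, (if F a y = 0 then 1 else 0) * (if Gm a z = 0 then 1 else 0) :=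
              Finset.sum_comm
          _ = ∑ a : G', (∑ y : Y, if F a y = 0 then 1 else 0) * (∑ z : Z, if Gm a z = 0 then 1 else 0) :=
              Finset.sum_congr rfl fun a _ => (Fintype.sum_mul_sum _ _).symm

/-- The key counting inequality: for multiadditive maps `α, β` into an abelian group,
`#{α = 0} · #{β = 0} ≤ #{α + β = 0} · N`. -/
lemma main_count (n : ℕ) : ∀ (ι : Type) [Fintype ι] [DecidableEq ι] (A : ι → Type)
    [∀ i, AddCommGroup (A i)] [∀ i, Fintype (A i)] (H : Type) [AddCommGroup H]
    (α β : (∀ i, A i) → H), Fintype.card ι = n → IsMultiadditive α → IsMultiadditive β →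
    Zc α * Zc β ≤ Zc (fun x => α x + β x) * Fintype.card (∀ i, A i) := by
  induction n with
  | zero =>
    intro ι _ _ A _ _ H _ α β hcard hα hβ
    haveI : IsEmpty ι := Fintype.card_eq_zero_iff.mp hcard
    simp only [Zc, Fintype.sum_unique, Fintype.card_unique]
    split_ifs <;> simp_all
  | succ n ih =>
    intro ι _ _ A _ _ H _ α β hcard hα hβ
    obtain ⟨i₀⟩ : Nonempty ι := Fintype.card_pos_iff.mp (by omega)
    set e := Equiv.piSplitAt i₀ A with he
    have hcard' : Fintype.card {j : ι // j ≠ i₀} = n := by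
      have h3 : Fintype.card {j : ι // ¬ j = i₀}
          = Fintype.card ι - Fintype.card {j : ι // j = i₀} := Fintype.card_subtype_compl _
      rw [Fintype.card_subtype_eq] at h3
      have h5 : Fintype.card {j : ι // j ≠ i₀} = Fintype.card {j : ι // ¬ j = i₀} :=
        Fintype.card_congr (Equiv.subtypeEquivRight fun _ => Iff.rfl)
      omega
    have hZsplit : ∀ (γ : (∀ i, A i) → H),
        Zc γ = ∑ a : A i₀, Zc (fun y : ∀ j : {j : ι // j ≠ i₀}, A j.val =>
          γ (e.symm (a, y))) := by
      intro γ
      show (∑ x : ∀ i, A i, if γ x = 0 then 1 else 0) = _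
      rw [← Equiv.sum_comp e.symm (fun x => if γ x = 0 then (1:ℕ) else 0),
        Fintype.sum_prod_type]
      rfl
    have hmulti' : ∀ (γ : (∀ i, A i) → H), IsMultiadditive γ → ∀ a : A i₀,
        IsMultiadditive (fun y : ∀ j : {j : ι // j ≠ i₀}, A j.val => γ (e.symm (a, y))) := by
      intro γ hγ a j y b c
      simp only
      rw [split_update_off, split_update_off, split_update_off]
      exact hγ j.val _ b c
    have haddcenter : ∀ (γ : (∀ i, A i) → H), IsMultiadditive γ →
        ∀ (y : ∀ j : {j : ι // j ≠ i₀}, A j.val) (a b : A i₀),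
        γ (e.symm (a + b, y)) = γ (e.symm (a, y)) + γ (e.symm (b, y)) := by
      intro γ hγ y a b
      have h0 : ∀ c : A i₀, e.symm (c, y) = Function.update (e.symm (0, y)) i₀ c :=
        fun c => (split_update_center i₀ 0 c y).symm
      rw [h0 (a + b), h0 a, h0 b]
      exact hγ i₀ _ a b
    have hcardPi : Fintype.card (∀ i, A i)
        = Fintype.card (A i₀) * Fintype.card (∀ j : {j : ι // j ≠ i₀}, A j.val) := by
      rw [Fintype.card_congr e, Fintype.card_prod]
    rw [hZsplit α, hZsplit β, hZsplit (fun x => α x + β x), hcardPi]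
    have corr := corr_count (fun a y => α (e.symm (a, y))) (fun a z => β (e.symm (a, z)))
      (fun y a b => haddcenter α hα y a b) (fun z a b => haddcenter β hβ z a b)
    have step2 : ∀ a : A i₀,
        Zc (fun y : ∀ j : {j : ι // j ≠ i₀}, A j.val => α (e.symm (a, y))) *
            Zc (fun y : ∀ j : {j : ι // j ≠ i₀}, A j.val => β (e.symm (a, y))) ≤
          Zc (fun y : ∀ j : {j : ι // j ≠ i₀}, A j.val =>
              α (e.symm (a, y)) + β (e.symm (a, y))) *
            Fintype.card (∀ j : {j : ι // j ≠ i₀}, A j.val) := fun a =>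
      ih {j : ι // j ≠ i₀} (fun j => A j.val) H
        (fun y => α (e.symm (a, y))) (fun y => β (e.symm (a, y)))
        hcard' (hmulti' α hα a) (hmulti' β hβ a)
    calc (∑ a : A i₀, Zc (fun y : ∀ j : {j : ι // j ≠ i₀}, A j.val => α (e.symm (a, y)))) *
          (∑ a : A i₀, Zc (fun y : ∀ j : {j : ι // j ≠ i₀}, A j.val => β (e.symm (a, y))))
        ≤ Fintype.card (A i₀) * ∑ a : A i₀,
            Zc (fun y : ∀ j : {j : ι // j ≠ i₀}, A j.val => α (e.symm (a, y))) *
              Zc (fun y : ∀ j : {j : ι // j ≠ i₀}, A j.val => β (e.symm (a, y))) := corr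
      _ ≤ Fintype.card (A i₀) * ∑ a : A i₀,
            Zc (fun y : ∀ j : {j : ι // j ≠ i₀}, A j.val =>
                α (e.symm (a, y)) + β (e.symm (a, y))) *
              Fintype.card (∀ j : {j : ι // j ≠ i₀}, A j.val) :=
          Nat.mul_le_mul_left _ (Finset.sum_le_sum fun a _ => step2 a)
      _ = (∑ a : A i₀, Zc (fun y : ∀ j : {j : ι // j ≠ i₀}, A j.val =>
              (fun x => α x + β x) (e.symm (a, y)))) *
            (Fintype.card (A i₀) * Fintype.card (∀ j : {j : ι // j ≠ i₀}, A j.val)) := by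
          rw [← Finset.sum_mul]
          ring

end BiasAux

/-- For multilinear maps `φ, ψ : A_1 × ⋯ × A_k → ℝ/ℤ`,
`bias(φ + ψ) ≥ bias(φ) · bias(ψ)`. -/
theorem bias_add_ge_mul (k : ℕ) (A : Fin k → Type) [∀ i, AddCommGroup (A i)]
    [∀ i, Fintype (A i)] (φ ψ : (∀ i, A i) → AddCircle (1 : ℝ))
    (hφ : IsMultiadditive φ) (hψ : IsMultiadditive ψ) :
    bias φ * bias ψ ≤ bias (fun x => φ x + ψ x) := by
  classical
  rcases Nat.eq_zero_or_pos k with hk | hk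
  · subst hk
    haveI : Unique (∀ i : Fin 0, A i) := Pi.uniqueOfIsEmpty _
    have hb : ∀ γ : (∀ i : Fin 0, A i) → AddCircle (1 : ℝ),
        bias γ = eChar (γ default) := by
      intro γ
      unfold bias
      rw [Fintype.sum_unique, Fintype.card_unique]
      simp
    rw [hb, hb, hb, ← eChar_add']
  · set i₀ : Fin k := ⟨0, hk⟩ with hi₀
    set e := Equiv.piSplitAt i₀ A with he
    have haddcenter : ∀ (γ : (∀ i, A i) → AddCircle (1 : ℝ)), IsMultiadditive γ →
        ∀ (y : ∀ j : {j : Fin k // j ≠ i₀}, A j.val) (a b : A i₀),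
        γ (e.symm (a + b, y)) = γ (e.symm (a, y)) + γ (e.symm (b, y)) := by
      intro γ hγ y a b
      have h0 : ∀ c : A i₀, e.symm (c, y) = Function.update (e.symm (0, y)) i₀ c :=
        fun c => (split_update_center i₀ 0 c y).symm
      rw [h0 (a + b), h0 a, h0 b]
      exact hγ i₀ _ a b
    -- the restricted maps into the group H of functions A i₀ → ℝ/ℤ
    set αφ : (∀ j : {j : Fin k // j ≠ i₀}, A j.val) → (A i₀ → AddCircle (1 : ℝ)) :=
      fun y => fun a => φ (e.symm (a, y)) with hαφ
    set αψ : (∀ j : {j : Fin k // j ≠ i₀}, A j.val) → (A i₀ → AddCircle (1 : ℝ)) :=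
      fun y => fun a => ψ (e.symm (a, y)) with hαψ
    have hmulti' : ∀ (γ : (∀ i, A i) → AddCircle (1 : ℝ)), IsMultiadditive γ →
        IsMultiadditive (fun y : ∀ j : {j : Fin k // j ≠ i₀}, A j.val =>
          (fun a => γ (e.symm (a, y)))) := by
      intro γ hγ j y b c
      funext a
      simp only [Pi.add_apply]
      rw [split_update_off, split_update_off, split_update_off]
      exact hγ j.val _ b c
    have key := main_count (Fintype.card {j : Fin k // j ≠ i₀}) {j : Fin k // j ≠ i₀}
      (fun j => A j.val) (A i₀ → AddCircle (1 : ℝ)) αφ αψ rfl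
      (hmulti' φ hφ) (hmulti' ψ hψ)
    -- rewrite each bias as a ratio of naturals
    have hzero : ∀ (γ : (∀ i, A i) → AddCircle (1 : ℝ))
        (y : ∀ j : {j : Fin k // j ≠ i₀}, A j.val),
        ((fun a => γ (e.symm (a, y))) = 0) ↔ ∀ a : A i₀, γ (e.symm (a, y)) = 0 := by
      intro γ y
      constructor
      · intro h a; exact congrFun h a
      · intro h; funext a; exact h a
    have sum_eq : ∀ (γ : (∀ i, A i) → AddCircle (1 : ℝ)), IsMultiadditive γ →
        (∑ x : ∀ i, A i, eChar (γ x)) =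
          ((Fintype.card (A i₀) * Zc (fun y : ∀ j : {j : Fin k // j ≠ i₀}, A j.val =>
            (fun a => γ (e.symm (a, y)))) : ℕ) : ℂ) := by
      intro γ hγ
      calc (∑ x : ∀ i, A i, eChar (γ x))
          = ∑ p : A i₀ × ∀ j : {j : Fin k // j ≠ i₀}, A j.val, eChar (γ (e.symm p)) :=
            (Equiv.sum_comp e.symm (fun x => eChar (γ x))).symm
        _ = ∑ a : A i₀, ∑ y : ∀ j : {j : Fin k // j ≠ i₀}, A j.val,
              eChar (γ (e.symm (a, y))) := Fintype.sum_prod_type _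
        _ = ∑ y : ∀ j : {j : Fin k // j ≠ i₀}, A j.val, ∑ a : A i₀,
              eChar (γ (e.symm (a, y))) := Finset.sum_comm
        _ = ∑ y : ∀ j : {j : Fin k // j ≠ i₀}, A j.val,
              (if ∀ a : A i₀, γ (e.symm (a, y)) = 0 then (Fintype.card (A i₀) : ℂ) else 0) :=
            Finset.sum_congr rfl fun y _ =>
              sum_eChar_additive _ (fun a b => haddcenter γ hγ y a b)
        _ = ∑ y : ∀ j : {j : Fin k // j ≠ i₀}, A j.val,
              (((if (fun a => γ (e.symm (a, y))) = 0 then Fintype.card (A i₀) else 0 : ℕ)) : ℂ) := by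
            refine Finset.sum_congr rfl fun y _ => ?_
            rw [if_congr (Iff.symm (hzero γ y)) rfl rfl]
            split_ifs <;> simp
        _ = (((∑ y : ∀ j : {j : Fin k // j ≠ i₀}, A j.val,
              if (fun a => γ (e.symm (a, y))) = 0 then Fintype.card (A i₀) else 0 : ℕ)) : ℂ) := by
            rw [Nat.cast_sum]
        _ = ((Fintype.card (A i₀) * Zc (fun y : ∀ j : {j : Fin k // j ≠ i₀}, A j.val =>
              (fun a => γ (e.symm (a, y)))) : ℕ) : ℂ) := by
            congr 1
            rw [Zc, Finset.mul_sum]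
            exact Finset.sum_congr rfl fun y _ => by split_ifs <;> simp
    have hcardPi : Fintype.card (∀ i, A i)
        = Fintype.card (A i₀) * Fintype.card (∀ j : {j : Fin k // j ≠ i₀}, A j.val) := by
      rw [Fintype.card_congr e, Fintype.card_prod]
    have hG : (0:ℝ) < Fintype.card (A i₀) := by positivity
    have hN : (0:ℝ) < Fintype.card (∀ j : {j : Fin k // j ≠ i₀}, A j.val) := by positivity
    have hbias : ∀ (γ : (∀ i, A i) → AddCircle (1 : ℝ)), IsMultiadditive γ →
        bias γ = (((Zc (fun y : ∀ j : {j : Fin k // j ≠ i₀}, A j.val =>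
            (fun a => γ (e.symm (a, y)))) : ℝ) /
          (Fintype.card (∀ j : {j : Fin k // j ≠ i₀}, A j.val) : ℝ) : ℝ) : ℂ) := by
      intro γ hγ
      unfold bias
      rw [sum_eq γ hγ, hcardPi]
      push_cast
      rw [mul_div_mul_left _ _ (by exact_mod_cast hG.ne' : (Fintype.card (A i₀) : ℂ) ≠ 0)]
    have hmultisum : IsMultiadditive (fun x => φ x + ψ x) := by
      intro i x a b
      simp only
      rw [hφ i x a b, hψ i x a b]
      abel
    rw [hbias φ hφ, hbias ψ hψ, hbias _ hmultisum]
    have hsum_restrict : (fun y : ∀ j : {j : Fin k // j ≠ i₀}, A j.val =>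
        (fun a => (fun x => φ x + ψ x) (e.symm (a, y)))) = fun y => αφ y + αψ y := by
      funext y; funext a; simp [hαφ, hαψ]
    rw [hsum_restrict]
    rw [← Complex.ofReal_mul, Complex.real_le_real]
    have c1 : ((Zc αφ : ℝ) * (Zc αψ : ℝ)) ≤
        (Zc (fun y => αφ y + αψ y) : ℝ) *
          (Fintype.card (∀ j : {j : Fin k // j ≠ i₀}, A j.val) : ℝ) := by
      exact_mod_cast key
    rw [div_mul_div_comm, div_le_div_iff₀ (by positivity) hN]
    nlinarith [c1, hN, Nat.cast_nonneg (α := ℝ) (Zc (fun y => αφ y + αψ y))]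
end

section
/- Let A_1, …, A_k and B_1, …, B_l be finite abelian groups, let φ : A_1 × ⋯ × A_k → ℝ/ℤ and ψ : B_1 × ⋯ × B_l → ℝ/ℤ be multilinear maps, and suppose φ factors through ψ. Then for each index i ∈ {1,…,l}, bias(φ) ≥ 1 − ∏_{j ≠ i} (1 − 1/|B_j|). -/
open scoped ComplexOrder

/-- `φ` factors through `ψ` if there is a partition `[k] = I_1 ∪ ⋯ ∪ I_l` into nonempty sets
and multilinear maps `φ_j : ∏_{i ∈ I_j} A_i → B_j` with
`φ(x) = ψ(φ_1(x_{I_1}), …, φ_l(x_{I_l}))`. -/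
def FactorsThrough' {k l : ℕ} {A : Fin k → Type} [∀ i, AddCommGroup (A i)]
    {B : Fin l → Type} [∀ j, AddCommGroup (B j)]
    (φ : (∀ i, A i) → AddCircle (1 : ℝ)) (ψ : (∀ j, B j) → AddCircle (1 : ℝ)) : Prop :=
  ∃ P : Fin l → Finset (Fin k),
    (∀ j, (P j).Nonempty) ∧
    (∀ j j', j ≠ j' → Disjoint (P j) (P j')) ∧
    (∀ i : Fin k, ∃ j, i ∈ P j) ∧
    ∃ φj : ∀ j, (∀ i : P j, A i) → B j,
      (∀ j, IsMultiadditive (φj j)) ∧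
      ∀ x : ∀ i, A i, φ x = ψ (fun j => φj j (fun i => x i))

/-!
After regrouping the coordinates of `φ` into the blocks `y_j = x_{I_j}`, the sum defining
`bias φ` becomes a sum of `e(ψ(φ_1(y_1), …, φ_l(y_l)))`. Fix all blocks except `y_i`. The
average over `y_i` is the average of a character of `B_i` pulled back along the multilinear
`φ_i`, so it is nonnegative; and it equals `1` as soon as `φ_j(y_j) = 0` for some `j ≠ i`. On
each line in one coordinate a multilinear map `φ_j` is a homomorphism into `B_j`, whose kernel
has index at most `|B_j|`, so `φ_j(y_j) = 0` with probability at least `1/|B_j|`. The blocks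
are independent, hence `bias φ ≥ P(∃ j ≠ i, φ_j(y_j) = 0) ≥ 1 - ∏_{j ≠ i} (1 - 1/|B_j|)`.
-/

open Finset Function

theorem sum_eChar_nonneg {G : Type} [AddCommGroup G] [Fintype G] (h : G →+ AddCircle (1 : ℝ)) :
    0 ≤ ∑ a, eChar (h a) := by
  classical
  let χ : AddChar G ℂ := Circle.coeHom.compAddChar (AddCircle.toCircle_addChar.compAddMonoidHom h)
  have hχ : ∑ a, eChar (h a) = ∑ a, χ a := rfl
  rw [hχ, χ.sum_eq_ite]
  split_ifs <;> positivity

theorem AddMonoidHom.card_le_card_filter_eq_zero_mul {G B : Type} [AddCommGroup G] [Fintype G]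
    [AddCommGroup B] [Fintype B] [DecidableEq B] (h : G →+ B) :
    Fintype.card G ≤ #{a | h a = 0} * Fintype.card B := by
  have hker : #{a | h a = 0} = Nat.card h.ker := by
    rw [← Fintype.card_subtype, ← Nat.card_eq_fintype_card]; rfl
  rw [hker, ← Nat.card_eq_fintype_card, ← Nat.card_eq_fintype_card, ← h.ker.card_mul_index,
    AddSubgroup.index_ker]
  gcongr
  exact AddSubgroup.card_le_card_addGroup h.range

section Slices

variable {κ : Type} [Fintype κ] [DecidableEq κ] {C : κ → Type} [∀ k, Fintype (C k)]

theorem card_smul_sum_eq_sum_sum_update {M : Type} [AddCommMonoid M] (c : κ)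
    (g : (∀ k, C k) → M) :
    Fintype.card (C c) • ∑ x, g x = ∑ x, ∑ a, g (update x c a) := by
  have hsplit : ∀ G : (∀ k, C k) → M,
      ∑ x, G x = ∑ r : ∀ k : {k // k ≠ c}, C k, ∑ a, G ((Equiv.piSplitAt c C).symm (a, r)) :=
    fun G => by
      rw [← (Equiv.piSplitAt c C).symm.sum_comp, Fintype.sum_prod_type, sum_comm]
  have hupd : ∀ a b r, update ((Equiv.piSplitAt c C).symm (b, r)) c a
      = (Equiv.piSplitAt c C).symm (a, r) := by
    intro a b r
    funext k
    rcases eq_or_ne k c with rfl | hk <;> simp [Equiv.piSplitAt, *]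
  rw [hsplit g, hsplit (fun x => ∑ a, g (update x c a)), smul_sum]
  simp only [hupd, sum_const, card_univ]

variable [∀ k, AddCommGroup (C k)]

theorem sum_eChar_nonneg_of_additive_at (c : κ) (f : (∀ k, C k) → AddCircle (1 : ℝ))
    (hf : ∀ x a b, f (update x c (a + b)) = f (update x c a) + f (update x c b)) :
    0 ≤ ∑ x, eChar (f x) := by
  have h : 0 ≤ Fintype.card (C c) • ∑ x, eChar (f x) := by
    rw [card_smul_sum_eq_sum_sum_update]
    exact sum_nonneg fun x _ => sum_eChar_nonneg (AddMonoidHom.mk' _ (hf x))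
  rw [nsmul_eq_mul, ← mul_zero (Fintype.card (C c) : ℂ)] at h
  exact le_of_mul_le_mul_left h (Nat.cast_pos.mpr Fintype.card_pos)

theorem card_le_card_filter_eq_zero_mul_of_additive_at {B : Type} [AddCommGroup B] [Fintype B]
    [DecidableEq B] (c : κ) (f : (∀ k, C k) → B)
    (hf : ∀ x a b, f (update x c (a + b)) = f (update x c a) + f (update x c b)) :
    Fintype.card (∀ k, C k) ≤ #{x | f x = 0} * Fintype.card B := by
  have hcount := card_smul_sum_eq_sum_sum_update c (fun x => if f x = 0 then 1 else 0)
  simp only [← card_filter, smul_eq_mul] at hcount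
  refine Nat.le_of_mul_le_mul_left ?_ (Fintype.card_pos (α := C c))
  calc Fintype.card (C c) * Fintype.card (∀ k, C k)
      = ∑ _x : ∀ k, C k, Fintype.card (C c) := by simp [mul_comm]
    _ ≤ ∑ x, #{a | f (update x c a) = 0} * Fintype.card B := sum_le_sum fun x _ =>
        (AddMonoidHom.mk' _ (hf x)).card_le_card_filter_eq_zero_mul
    _ = _ := by rw [← sum_mul, ← hcount, mul_assoc]

end Slices

theorem IsMultiadditive.apply_eq_zero {ι : Type} [DecidableEq ι] {A : ι → Type}
    [∀ i, AddCommGroup (A i)] {B : Type} [AddCommGroup B] {φ : (∀ i, A i) → B}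
    (hφ : IsMultiadditive φ) {x : ∀ i, A i} {j : ι} (hx : x j = 0) : φ x = 0 := by
  have h := hφ j x 0 0
  rw [add_zero, ← hx, update_eq_self] at h
  exact right_eq_add.mp h

theorem card_filter_exists_div_card {ι : Type} [Fintype ι] [DecidableEq ι] {T : ι → Type}
    [∀ j, Fintype (T j)] [∀ j, Nonempty (T j)] (s : Finset ι) (p : ∀ j, T j → Prop)
    [∀ j, DecidablePred (p j)] :
    (#{y : ∀ j, T j | ∃ j ∈ s, p j (y j)} : ℝ) / Fintype.card (∀ j, T j)
      = 1 - ∏ j ∈ s, (1 - #{t | p j t} / Fintype.card (T j) : ℝ) := by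
  have hcompl : ({y : ∀ j, T j | ¬∃ j ∈ s, p j (y j)} : Finset _)
      = Fintype.piFinset fun j => if j ∈ s then ({t | ¬p j t} : Finset (T j)) else univ := by
    ext y
    simp only [mem_filter, mem_univ, true_and, Fintype.mem_piFinset, not_exists, not_and]
    refine ⟨fun h j => ?_, fun h j hj => ?_⟩
    · split_ifs with hj
      · simpa using h j hj
      · exact mem_univ _
    · simpa [hj] using h j
  have hcard := card_filter_add_card_filter_not (s := (univ : Finset (∀ j, T j)))
    (fun y => ∃ j ∈ s, p j (y j))
  rw [hcompl, Fintype.card_piFinset, card_univ] at hcard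
  have hpos : ∀ j, (0 : ℝ) < Fintype.card (T j) := fun j => Nat.cast_pos.mpr Fintype.card_pos
  have hprod : ∏ j ∈ s, (1 - #{t | p j t} / Fintype.card (T j) : ℝ)
      = (∏ j, #(if j ∈ s then ({t | ¬p j t} : Finset (T j)) else univ) : ℕ)
          / Fintype.card (∀ j, T j) := by
    rw [← Fintype.prod_ite_mem, Fintype.card_pi, Nat.cast_prod, Nat.cast_prod, ← prod_div_distrib]
    refine prod_congr rfl fun j _ => ?_
    split_ifs
    · have hc := card_filter_add_card_filter_not (s := univ) (p j)
      rw [card_univ] at hc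
      rw [eq_div_iff (hpos j).ne', sub_mul, div_mul_cancel₀ _ (hpos j).ne', one_mul, ← hc]
      push_cast
      ring
    · rw [card_univ, div_self (hpos j).ne']
  rw [hprod, eq_sub_iff_add_eq, ← add_div, ← Nat.cast_add, hcard,
    div_self (Nat.cast_pos.mpr Fintype.card_pos).ne']

theorem card_filter_exists_le_sum_eChar {ι : Type} [Fintype ι] [DecidableEq ι] {T B : ι → Type}
    [∀ j, AddCommGroup (T j)] [∀ j, Fintype (T j)] [∀ j, AddCommGroup (B j)]
    [∀ j, DecidableEq (B j)] {ψ : (∀ j, B j) → AddCircle (1 : ℝ)} (hψ : IsMultiadditive ψ)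
    (F : ∀ j, T j → B j) {s : Finset ι} {i : ι} (hi : i ∉ s)
    (hchar : ∀ h : B i →+ AddCircle (1 : ℝ), 0 ≤ ∑ t, eChar (h (F i t))) :
    (#{y : ∀ j, T j | ∃ j ∈ s, F j (y j) = 0} : ℂ)
      ≤ ∑ y : ∀ j, T j, eChar (ψ fun j => F j (y j)) := by
  have hslice : ∀ y : ∀ j, T j,
      (if ∃ j ∈ s, F j (y j) = 0 then (Fintype.card (T i) : ℂ) else 0)
        ≤ ∑ a, eChar (ψ fun j => F j (update y i a j)) := by
    intro y
    split_ifs with hy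
    · obtain ⟨j, hj, hzero⟩ := hy
      have hji : j ≠ i := ne_of_mem_of_not_mem hj hi
      have hvanish : ∀ a, (ψ fun j' => F j' (update y i a j')) = 0 := fun a =>
        hψ.apply_eq_zero (j := j) (by rw [update_of_ne hji]; exact hzero)
      simp [hvanish, eChar]
    · simp only [apply_update F y i]
      exact hchar (AddMonoidHom.mk' (fun b => ψ (update (fun j => F j (y j)) i b)) (hψ i _))
  have hT : (0 : ℂ) < Fintype.card (T i) := Nat.cast_pos.mpr Fintype.card_pos
  refine le_of_mul_le_mul_left ?_ hT
  calc (Fintype.card (T i) : ℂ) * #{y : ∀ j, T j | ∃ j ∈ s, F j (y j) = 0}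
      = ∑ y : ∀ j, T j,
          if ∃ j ∈ s, F j (y j) = 0 then (Fintype.card (T i) : ℂ) else 0 := by
        simp [sum_ite, mul_comm]
    _ ≤ ∑ y : ∀ j, T j, ∑ a, eChar (ψ fun j => F j (update y i a j)) :=
        sum_le_sum fun y _ => hslice y
    _ = Fintype.card (T i) • ∑ y : ∀ j, T j, eChar (ψ fun j => F j (y j)) :=
        (card_smul_sum_eq_sum_sum_update i fun y => eChar (ψ fun j => F j (y j))).symm
    _ = _ := nsmul_eq_mul ..

theorem one_sub_prod_le_bias_comp {ι : Type} [Fintype ι] [DecidableEq ι] {T B : ι → Type}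
    [∀ j, AddCommGroup (T j)] [∀ j, Fintype (T j)] [∀ j, AddCommGroup (B j)]
    [∀ j, Fintype (B j)] [∀ j, DecidableEq (B j)] {ψ : (∀ j, B j) → AddCircle (1 : ℝ)}
    (hψ : IsMultiadditive ψ) (F : ∀ j, T j → B j) {s : Finset ι} {i : ι} (hi : i ∉ s)
    (hchar : ∀ h : B i →+ AddCircle (1 : ℝ), 0 ≤ ∑ t, eChar (h (F i t)))
    (hzeros : ∀ j ∈ s, Fintype.card (T j) ≤ #{t | F j t = 0} * Fintype.card (B j)) :
    ((1 - ∏ j ∈ s, (1 - 1 / (Fintype.card (B j) : ℝ)) : ℝ) : ℂ)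
      ≤ bias fun y : ∀ j, T j => ψ fun j => F j (y j) := by
  have hreal : 1 - ∏ j ∈ s, (1 - 1 / (Fintype.card (B j) : ℝ))
      ≤ #{y : ∀ j, T j | ∃ j ∈ s, F j (y j) = 0} / Fintype.card (∀ j, T j) := by
    refine le_of_le_of_eq ?_ (card_filter_exists_div_card s fun j t => F j t = 0).symm
    gcongr 1 - ∏ j ∈ s, ?_ with j hj
    · intro j _
      rw [sub_nonneg]
      exact div_le_one_of_le₀ (by exact_mod_cast card_le_univ _) (Nat.cast_nonneg _)
    · rw [sub_le_sub_iff_left, div_le_div_iff₀ (Nat.cast_pos.mpr Fintype.card_pos)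
        (Nat.cast_pos.mpr Fintype.card_pos), one_mul]
      exact_mod_cast hzeros j hj
  calc ((1 - ∏ j ∈ s, (1 - 1 / (Fintype.card (B j) : ℝ)) : ℝ) : ℂ)
      ≤ ((#{y : ∀ j, T j | ∃ j ∈ s, F j (y j) = 0} / Fintype.card (∀ j, T j) : ℝ) : ℂ) :=
        Complex.real_le_real.mpr hreal
    _ = (#{y : ∀ j, T j | ∃ j ∈ s, F j (y j) = 0} : ℂ) / Fintype.card (∀ j, T j) := by
        norm_cast
    _ ≤ bias fun y : ∀ j, T j => ψ fun j => F j (y j) :=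
        div_le_div_of_nonneg_right (card_filter_exists_le_sum_eChar hψ F hi hchar) (Nat.cast_nonneg _)

theorem bijective_restrict_of_partition {ι κ : Type} {A : ι → Type} {P : κ → Finset ι}
    (hdisj : ∀ j j', j ≠ j' → Disjoint (P j) (P j')) (hcov : ∀ a, ∃ j, a ∈ P j) :
    Bijective fun (x : ∀ a, A a) (j : κ) (p : P j) => x p := by
  choose block hblock using hcov
  have hblock_eq : ∀ {a j}, a ∈ P j → block a = j := fun {a j} ha =>
    by_contra fun hne => disjoint_left.mp (hdisj _ _ hne) (hblock a) ha
  refine ⟨fun x x' hxx' => funext fun a => congrFun (congrFun hxx' (block a)) ⟨a, hblock a⟩,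
    fun y => ⟨fun a => y (block a) ⟨a, hblock a⟩, funext fun j => funext fun ⟨a, ha⟩ => ?_⟩⟩
  obtain rfl := hblock_eq ha
  rfl

theorem bias_eq_of_bijective {ι κ : Type} [Fintype ι] [DecidableEq ι] [Fintype κ]
    [DecidableEq κ] {A : ι → Type} {T : κ → Type} [∀ i, Fintype (A i)] [∀ j, Fintype (T j)]
    {φ : (∀ i, A i) → AddCircle (1 : ℝ)} {χ : (∀ j, T j) → AddCircle (1 : ℝ)}
    {e : (∀ i, A i) → ∀ j, T j} (he : Bijective e) (h : ∀ x, φ x = χ (e x)) :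
    bias φ = bias χ := by
  simp only [bias, h, he.sum_comp fun y => eChar (χ y), Fintype.card_of_bijective he]

theorem bias_ge_one_sub_prod_of_factorsThrough_general (k l : ℕ)
    (A : Fin k → Type) [∀ i, AddCommGroup (A i)] [∀ i, Fintype (A i)]
    (B : Fin l → Type) [∀ j, AddCommGroup (B j)] [∀ j, Fintype (B j)]
    (φ : (∀ i, A i) → AddCircle (1 : ℝ)) (ψ : (∀ j, B j) → AddCircle (1 : ℝ))
    (hψ : IsMultiadditive ψ)
    (hfac : FactorsThrough' φ ψ) (i : Fin l) :
    ((1 - ∏ j ∈ Finset.univ.erase i, (1 - 1 / (Fintype.card (B j) : ℝ)) : ℝ) : ℂ) ≤ bias φ := by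
  classical
  obtain ⟨P, hPne, hPdisj, hPcov, F, hF, hφ⟩ := hfac
  rw [bias_eq_of_bijective (χ := fun y => ψ fun j => F j (y j))
    (bijective_restrict_of_partition hPdisj hPcov) hφ]
  refine one_sub_prod_le_bias_comp hψ F (notMem_erase i univ) (fun h => ?_) (fun j _ => ?_)
  · obtain ⟨c, hc⟩ := hPne i
    exact sum_eChar_nonneg_of_additive_at (⟨c, hc⟩ : P i) (fun t => h (F i t)) fun x a b => by
      rw [hF i ⟨c, hc⟩ x a b, map_add]
  · obtain ⟨c, hc⟩ := hPne j
    exact card_le_card_filter_eq_zero_mul_of_additive_at (⟨c, hc⟩ : P j) (F j) (hF j ⟨c, hc⟩)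

/-- If `φ : A_1 × ⋯ × A_k → ℝ/ℤ` and `ψ : B_1 × ⋯ × B_l → ℝ/ℤ` are multilinear and `φ` factors
through `ψ`, then for each `i ∈ [l]`, `bias(φ) ≥ 1 − ∏_{j ≠ i} (1 − 1/|B_j|)`. -/
theorem bias_ge_one_sub_prod_of_factorsThrough (k l : ℕ)
    (A : Fin k → Type) [∀ i, AddCommGroup (A i)] [∀ i, Fintype (A i)]
    (B : Fin l → Type) [∀ j, AddCommGroup (B j)] [∀ j, Fintype (B j)]
    (φ : (∀ i, A i) → AddCircle (1 : ℝ)) (ψ : (∀ j, B j) → AddCircle (1 : ℝ))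
    (hφ : IsMultiadditive φ) (hψ : IsMultiadditive ψ)
    (hfac : FactorsThrough' φ ψ) (i : Fin l) :
    ((1 - ∏ j ∈ Finset.univ.erase i, (1 - 1 / (Fintype.card (B j) : ℝ)) : ℝ) : ℂ) ≤ bias φ :=
  bias_ge_one_sub_prod_of_factorsThrough_general k l A B φ ψ hψ hfac i
end

section
/- Let k ≥ 2, let A_1, …, A_k be finite abelian groups, and let φ : A_1 × ⋯ × A_k → ℝ/ℤ be a multilinear map whose image contains an element of order q = p^n for some prime p and n ≥ 1. Then bias(φ) ≤ (n+1)^{k-2} / q. -/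
open scoped ComplexOrder

/-!
Orthogonality of characters along the lines in direction `i₀` turns `bias φ` into the proportion
of points `x` such that `φ` vanishes on the whole line through `x` in direction `i₀`.

To bound this proportion, fix a second coordinate `i₁ ≠ i₀` and slice: each `a ∈ A i₁` gives the
map `x ↦ φ (update x i₁ a)`, multilinear in the remaining coordinates. Call the level of `a` the
largest `j ≤ n` such that some value of this slice has order divisible by `p ^ j`; by induction the
proportion for the slice is at most `(j + 1) ^ (k - 3) / p ^ j`. The `a` of level at most `j < n`
lie in a subgroup of `A i₁` of index at least `p ^ (n - j)`, because `φ` takes a value of order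
`p ^ n`; so level `j` has frequency at most `p ^ (j - n)`, and summing over the `n + 1` levels
costs the factor `n + 1`. The induction starts from maps of a single coordinate, which have no
vanishing lines unless they vanish identically.
-/

open Finset Function

namespace Nat.Prime
variable {p : ℕ} (hp : p.Prime)
include hp

lemma pow_dvd_or_pow_dvd_of_pow_dvd_lcm {k a b : ℕ} (ha : a ≠ 0) (hb : b ≠ 0)
    (h : p ^ k ∣ a.lcm b) : p ^ k ∣ a ∨ p ^ k ∣ b := by
  simp only [hp.pow_dvd_iff_le_factorization ha, hp.pow_dvd_iff_le_factorization hb,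
    hp.pow_dvd_iff_le_factorization (Nat.lcm_ne_zero ha hb), Nat.factorization_lcm ha hb,
    Finsupp.sup_apply] at h ⊢
  exact le_max_iff.mp h

lemma pow_sub_dvd_of_pow_dvd_mul {n j a b : ℕ} (h : p ^ n ∣ a * b)
    (hb : ¬ p ^ (j + 1) ∣ b) : p ^ (n - j) ∣ a := by
  rcases eq_or_ne a 0 with rfl | ha
  · exact dvd_zero _
  have hb0 : b ≠ 0 := by rintro rfl; exact hb (dvd_zero _)
  rw [hp.pow_dvd_iff_le_factorization (mul_ne_zero ha hb0), Nat.factorization_mul ha hb0,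
    Finsupp.add_apply] at h
  rw [hp.pow_dvd_iff_le_factorization hb0] at hb
  rw [hp.pow_dvd_iff_le_factorization ha]
  omega

end Nat.Prime

lemma addOrderOf_dvd_mul_addOrderOf_nsmul {G : Type*} [AddMonoid G] (t : ℕ) (y : G) :
    addOrderOf y ∣ t * addOrderOf (t • y) :=
  addOrderOf_dvd_of_nsmul_eq_zero (by rw [mul_nsmul, addOrderOf_nsmul_eq_zero])

lemma AddSubgroup.dvd_index_of_forall_nsmul_mem {G : Type*} [AddCommGroup G] (H : AddSubgroup G)
    (z : G) {m : ℕ} (h : ∀ t : ℕ, t • z ∈ H → m ∣ t) : m ∣ H.index := by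
  rw [H.index_eq_card]
  refine (h _ ?_).trans (_root_.addOrderOf_dvd_natCard (z : G ⧸ H))
  rw [← QuotientAddGroup.eq_zero_iff, QuotientAddGroup.mk_nsmul, addOrderOf_nsmul_eq_zero]

lemma AddSubgroup.card_mul_le_of_dvd_index {G : Type*} [AddGroup G] [Finite G]
    (H : AddSubgroup G) {m : ℕ} (h : m ∣ H.index) : Nat.card H * m ≤ Nat.card G :=
  H.card_mul_index ▸
    Nat.mul_le_mul_left _ (Nat.le_of_dvd (Nat.pos_of_ne_zero H.index_ne_zero_of_finite) h)

section OrderValuation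
variable {G B : Type*} [AddCommGroup G] [AddCommGroup B] (p : ℕ) [hp : Fact p.Prime]

/-- Elements of infinite order have `addOrderOf y = 0` and are therefore excluded. -/
def orderValuationLE (k : ℕ) : AddSubgroup B where
  carrier := {y | ¬ p ^ (k + 1) ∣ addOrderOf y}
  zero_mem' := by simp [hp.out.ne_one]
  neg_mem' := by simp
  add_mem' {a b} ha hb hab := by
    have ha0 : addOrderOf a ≠ 0 := fun h => ha (h ▸ dvd_zero _)
    have hb0 : addOrderOf b ≠ 0 := fun h => hb (h ▸ dvd_zero _)
    exact (hp.out.pow_dvd_or_pow_dvd_of_pow_dvd_lcm ha0 hb0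
      (hab.trans (AddCommute.all a b).addOrderOf_add_dvd_lcm)).elim ha hb

variable {p}

lemma mem_orderValuationLE {k : ℕ} {y : B} :
    y ∈ orderValuationLE p k ↔ ¬ p ^ (k + 1) ∣ addOrderOf y := Iff.rfl

lemma pow_sub_dvd_index_comap_orderValuationLE (f : G →+ B) (z : G) {n : ℕ}
    (hz : p ^ n ∣ addOrderOf (f z)) (k : ℕ) :
    p ^ (n - k) ∣ ((orderValuationLE p k).comap f).index :=
  AddSubgroup.dvd_index_of_forall_nsmul_mem _ z fun t ht =>
    hp.out.pow_sub_dvd_of_pow_dvd_mul (hz.trans (addOrderOf_dvd_mul_addOrderOf_nsmul t (f z)))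
      (by simpa [mem_orderValuationLE] using ht)

end OrderValuation

lemma eChar_eq_one_iff {y : AddCircle (1 : ℝ)} : eChar y = 1 ↔ y = 0 := by
  rw [eChar, Circle.coe_eq_one, ← AddCircle.toCircle_zero,
    (AddCircle.injective_toCircle one_ne_zero).eq_iff]

lemma sum_eChar_eq_ite {G : Type*} [AddCommGroup G] [Fintype G] (f : G →+ AddCircle (1 : ℝ))
    [Decidable (∀ a, f a = 0)] :
    ∑ a, eChar (f a) = if ∀ a, f a = 0 then (Fintype.card G : ℂ) else 0 := by
  let ψ : AddChar G ℂ := Circle.coeHom.compAddChar (AddCircle.toCircle_addChar.compAddMonoidHom f)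
  have hψ : ∀ a, ψ a = eChar (f a) := fun _ => rfl
  simpa [AddChar.eq_zero_iff, hψ, eChar_eq_one_iff] using ψ.sum_eq_ite

section Lines
variable {ι : Type*} [Fintype ι] [DecidableEq ι] {A : ι → Type*} [∀ i, Fintype (A i)]

lemma Fintype.sum_sum_update {M : Type*} [AddCommMonoid M] (i : ι) (f : (∀ j, A j) → M) :
    ∑ a : A i, ∑ x, f (update x i a) = Fintype.card (A i) • ∑ x, f x := by
  let e : Equiv.Perm (A i × ∀ j, A j) :=
    Involutive.toPerm (fun q => (q.2 i, update q.2 i q.1)) fun q => by simp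
  calc ∑ a : A i, ∑ x, f (update x i a) = ∑ q, f (e q).2 := (Fintype.sum_prod_type' _).symm
    _ = ∑ q : A i × ∀ j, A j, f q.2 := Equiv.sum_comp e (f ∘ Prod.snd)
    _ = _ := by simp [Fintype.sum_prod_type]

variable {B : Type*} [Zero B]

open scoped Classical in
noncomputable def nullLines (φ : (∀ i, A i) → B) (i : ι) : Finset (∀ i, A i) :=
  {x | ∀ a, φ (update x i a) = 0}

lemma mem_nullLines {φ : (∀ i, A i) → B} {i : ι} {x : ∀ i, A i} :
    x ∈ nullLines φ i ↔ ∀ a, φ (update x i a) = 0 := by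
  simp [nullLines]

lemma nullLines_eq_empty {φ : (∀ i, A i) → B} {i : ι} (hφ : DependsOn φ {i}) {x : ∀ i, A i}
    (hx : φ x ≠ 0) : nullLines φ i = ∅ := by
  refine eq_empty_of_forall_notMem fun y hy => hx ?_
  rw [← mem_nullLines.mp hy (x i)]
  exact hφ fun j hj => by subst hj; simp

lemma card_mul_card_nullLines {i₀ i₁ : ι} (hne : i₀ ≠ i₁) (φ : (∀ i, A i) → B) :
    Fintype.card (A i₁) * #(nullLines φ i₀)
      = ∑ a : A i₁, #(nullLines (fun x => φ (update x i₁ a)) i₀) := by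
  classical
  simp only [card_eq_sum_ones, sum_filter, nullLines, ← smul_eq_mul,
    ← Fintype.sum_sum_update i₁, update_comm hne]

end Lines

section Additive
variable {ι : Type*} [DecidableEq ι] {A : ι → Type*} [∀ i, AddCommGroup (A i)]
  {B : Type*} [AddCommGroup B]

def IsAdditiveIn (φ : (∀ i, A i) → B) (i : ι) : Prop :=
  ∀ x (a b : A i), φ (update x i (a + b)) = φ (update x i a) + φ (update x i b)

def IsAdditiveIn.lineHom {φ : (∀ i, A i) → B} {i : ι} (h : IsAdditiveIn φ i) (x : ∀ i, A i) :
    A i →+ B :=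
  AddMonoidHom.mk' (fun a => φ (update x i a)) (h x)

@[simp]
lemma IsAdditiveIn.lineHom_apply {φ : (∀ i, A i) → B} {i : ι} (h : IsAdditiveIn φ i)
    (x : ∀ i, A i) (a : A i) : h.lineHom x a = φ (update x i a) := rfl

lemma IsAdditiveIn.update {φ : (∀ i, A i) → B} {i j : ι} (h : IsAdditiveIn φ i) (hij : i ≠ j)
    (a : A j) : IsAdditiveIn (fun x => φ (update x j a)) i := fun x b c => by
  simp only [update_comm hij]
  exact h _ b c

lemma sum_eChar_eq_card_nullLines [Fintype ι] [∀ i, Fintype (A i)]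
    {φ : (∀ i, A i) → AddCircle (1 : ℝ)} {i : ι} (h : IsAdditiveIn φ i) :
    ∑ x, eChar (φ x) = #(nullLines φ i) := by
  classical
  have hline (x : ∀ i, A i) : ∑ a, eChar (φ (update x i a))
      = if x ∈ nullLines φ i then (Fintype.card (A i) : ℂ) else 0 :=
    (sum_eChar_eq_ite (h.lineHom x)).trans (if_congr mem_nullLines.symm rfl rfl)
  have hcard : (Fintype.card (A i) : ℂ) ≠ 0 := Nat.cast_ne_zero.mpr Fintype.card_ne_zero
  refine mul_left_cancel₀ hcard ?_
  rw [← nsmul_eq_mul, ← Fintype.sum_sum_update i, sum_comm]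
  simp [hline, mul_comm]

end Additive

lemma Finset.sum_comp_mul_le_card_mul_sum {α : Type*} [Fintype α] (L : α → ℕ) {n : ℕ}
    (hL : ∀ a, L a ≤ n) (c C : ℕ → ℕ) (hc : ∀ j ≤ n, #{a | L a = j} * c j ≤ Fintype.card α) :
    ∑ a, c (L a) * C (L a) ≤ Fintype.card α * ∑ j ∈ range (n + 1), C j := by
  calc ∑ a, c (L a) * C (L a) = ∑ j ∈ range (n + 1), ∑ a with L a = j, c (L a) * C (L a) :=
        (sum_fiberwise_of_maps_to (fun a _ => mem_range.mpr (Nat.lt_succ_of_le (hL a))) _).symm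
    _ = ∑ j ∈ range (n + 1), #{a | L a = j} * c j * C j := sum_congr rfl fun j _ => by
        rw [sum_congr rfl fun a ha => by rw [(mem_filter.mp ha).2], sum_const, smul_eq_mul,
          mul_assoc]
    _ ≤ ∑ j ∈ range (n + 1), Fintype.card α * C j :=
        sum_le_sum fun j hj => Nat.mul_le_mul_right _ (hc j (Nat.lt_succ_iff.mp (mem_range.mp hj)))
    _ = _ := (mul_sum ..).symm

/-- The bound that slicing produces for maps depending on `r + 1` coordinates; for `r ≥ 1` it is
`(n + r - 1).choose (r - 1)`. -/
def sliceBound : ℕ → ℕ → ℕ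
  | 0, n => if n = 0 then 1 else 0
  | r + 1, n => ∑ j ∈ range (n + 1), sliceBound r j

lemma sliceBound_succ_le (r n : ℕ) : sliceBound (r + 1) n ≤ (n + 1) ^ r := by
  induction r generalizing n with
  | zero => simp [sliceBound, sum_ite_eq']
  | succ r ih =>
    calc sliceBound (r + 2) n ≤ ∑ j ∈ range (n + 1), (n + 1) ^ r :=
          sum_le_sum fun j hj => (ih j).trans (Nat.pow_le_pow_left (by simpa using hj) r)
      _ = (n + 1) ^ (r + 1) := by rw [sum_const, card_range, smul_eq_mul, pow_succ']

section Slicing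
variable {ι : Type*} [Fintype ι] [DecidableEq ι] {A : ι → Type*} [∀ i, AddCommGroup (A i)]
  [∀ i, Fintype (A i)] {B : Type*} [AddCommGroup B] {p : ℕ} [hp : Fact p.Prime]

open scoped Classical in
lemma card_filter_orderValuationLE_mul_le {φ : (∀ i, A i) → B} {i : ι} (h : IsAdditiveIn φ i)
    {z : ∀ i, A i} {n : ℕ} (hz : p ^ n ∣ addOrderOf (φ z)) (j : ℕ) :
    #{a : A i | ∀ x, φ (update x i a) ∈ orderValuationLE p j} * p ^ (n - j)
      ≤ Fintype.card (A i) := by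
  let H := ⨅ x, (orderValuationLE p j).comap (h.lineHom x)
  have hH : p ^ (n - j) ∣ H.index :=
    (pow_sub_dvd_index_comap_orderValuationLE (h.lineHom z) (z i) (by simpa using hz) j).trans
      (AddSubgroup.index_dvd_of_le (iInf_le _ z))
  convert H.card_mul_le_of_dvd_index hH using 2
  · rw [← Nat.card_eq_finsetCard]
    congr
    ext a
    simp [H]
  · exact Nat.card_eq_fintype_card.symm

theorem pow_mul_card_nullLines_le_sum {φ : (∀ i, A i) → B} {i₀ i₁ : ι} (hne : i₀ ≠ i₁)
    (h₁ : IsAdditiveIn φ i₁) {n : ℕ} (hn : ∃ x, p ^ n ∣ addOrderOf (φ x)) (C : ℕ → ℕ)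
    (hC : ∀ (a : A i₁), ∀ j ≤ n, (∃ x, p ^ j ∣ addOrderOf (φ (update x i₁ a))) →
      p ^ j * #(nullLines (fun x => φ (update x i₁ a)) i₀) ≤ C j) :
    p ^ n * #(nullLines φ i₀) ≤ ∑ j ∈ range (n + 1), C j := by
  classical
  obtain ⟨z, hz⟩ := hn
  let L (a : A i₁) : ℕ :=
    Nat.findGreatest (fun j => ∃ x, p ^ j ∣ addOrderOf (φ (update x i₁ a))) n
  have hL_le (a : A i₁) : L a ≤ n := Nat.findGreatest_le n
  have hL_spec (a : A i₁) : ∃ x, p ^ L a ∣ addOrderOf (φ (update x i₁ a)) :=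
    Nat.findGreatest_spec (P := fun j => ∃ x, p ^ j ∣ addOrderOf (φ (update x i₁ a)))
      (Nat.zero_le n) ⟨z, by simp⟩
  have hfiber (j : ℕ) (hj : j ≤ n) : #{a | L a = j} * p ^ (n - j) ≤ Fintype.card (A i₁) := by
    rcases hj.lt_or_eq with hj | rfl
    · refine le_trans (Nat.mul_le_mul_right _ (card_le_card fun a ha => ?_))
        (card_filter_orderValuationLE_mul_le h₁ hz j)
      rw [mem_filter] at ha ⊢
      obtain ⟨-, rfl⟩ := ha
      refine ⟨mem_univ a, fun x => mem_orderValuationLE.mpr fun hx => ?_⟩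
      exact Nat.findGreatest_is_greatest (lt_add_one (L a)) hj ⟨x, hx⟩
    · simpa using card_le_univ _
  refine Nat.le_of_mul_le_mul_left ?_ (Fintype.card_pos (α := A i₁))
  calc Fintype.card (A i₁) * (p ^ n * #(nullLines φ i₀))
      = ∑ a, p ^ n * #(nullLines (fun x => φ (update x i₁ a)) i₀) := by
        rw [mul_left_comm, card_mul_card_nullLines hne, mul_sum]
    _ ≤ ∑ a, p ^ (n - L a) * C (L a) := sum_le_sum fun a _ => by
        rw [← Nat.sub_add_cancel (hL_le a), pow_add, mul_assoc, Nat.add_sub_cancel]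
        exact Nat.mul_le_mul_left _ (hC a _ (hL_le a) (hL_spec a))
    _ ≤ _ := sum_comp_mul_le_card_mul_sum L hL_le _ C hfiber

theorem pow_mul_card_nullLines_le (r : ℕ) {S : Finset ι} {φ : (∀ i, A i) → B} {i₀ : ι} {n : ℕ}
    (hS : #S = r + 1) (hdep : DependsOn φ S) (hadd : ∀ i ∈ S, IsAdditiveIn φ i) (hi₀ : i₀ ∈ S)
    (hn : ∃ x, p ^ n ∣ addOrderOf (φ x)) :
    p ^ n * #(nullLines φ i₀) ≤ sliceBound r n * Fintype.card (∀ i, A i) := by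
  induction r generalizing S φ n with
  | zero =>
    rcases eq_or_ne n 0 with rfl | hn0
    · simpa [sliceBound] using card_le_univ (nullLines φ i₀)
    obtain ⟨x, hx⟩ := hn
    obtain ⟨i, rfl⟩ := card_eq_one.mp hS
    obtain rfl := mem_singleton.mp hi₀
    have hx0 : φ x ≠ 0 := by
      rintro h
      simp [h, hp.out.ne_one, hn0] at hx
    simp [nullLines_eq_empty (by simpa using hdep) hx0]
  | succ r ih =>
    obtain ⟨i₁, hi₁, hne⟩ := S.exists_mem_ne (by omega) i₀
    calc p ^ n * #(nullLines φ i₀)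
        ≤ ∑ j ∈ range (n + 1), sliceBound r j * Fintype.card (∀ i, A i) :=
          pow_mul_card_nullLines_le_sum hne.symm (hadd i₁ hi₁) hn _ fun a j _ hj =>
            ih (by rw [card_erase_of_mem hi₁, hS]; rfl) (hdep.update i₁ a)
              (fun i hi => (hadd i (mem_of_mem_erase hi)).update (ne_of_mem_erase hi) a)
              (mem_erase.mpr ⟨hne.symm, hi₀⟩) hj
      _ = sliceBound (r + 1) n * Fintype.card (∀ i, A i) := by rw [sliceBound, sum_mul]

end Slicing

theorem bias_le_of_order_general (k : ℕ) (hk : 2 ≤ k) (A : Fin k → Type) [∀ i, AddCommGroup (A i)]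
    [∀ i, Fintype (A i)] (φ : (∀ i, A i) → AddCircle (1 : ℝ)) (hφ : IsMultiadditive φ)
    (p n : ℕ) (hp : p.Prime) (hord : ∃ x, addOrderOf (φ x) = p ^ n) :
    bias φ ≤ ((((n + 1) ^ (k - 2) : ℕ) : ℝ) / ((p ^ n : ℕ) : ℝ) : ℂ) := by
  have : Fact p.Prime := ⟨hp⟩
  obtain ⟨r, rfl⟩ := Nat.exists_eq_add_of_le' hk
  have hcount : p ^ n * #(nullLines φ 0) ≤ (n + 1) ^ r * Fintype.card (∀ i, A i) :=
    (pow_mul_card_nullLines_le (r + 1) (S := univ) (by simp) (by simpa using dependsOn_univ φ)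
      (fun i _ => hφ i) (mem_univ 0) (hord.imp fun _ h => h.symm.dvd)).trans
      (Nat.mul_le_mul_right _ (sliceBound_succ_le r n))
  have hN : (0 : ℝ) < Fintype.card (∀ i, A i) := Nat.cast_pos.mpr Fintype.card_pos
  have hreal : (#(nullLines φ 0) : ℝ) / Fintype.card (∀ i, A i)
      ≤ ((n + 1) ^ r : ℕ) / (p ^ n : ℕ) := by
    rw [div_le_div_iff₀ hN (by simp [hp.pos])]
    exact_mod_cast mul_comm (p ^ n) _ ▸ hcount
  rw [bias, sum_eChar_eq_card_nullLines (hφ 0), Nat.add_sub_cancel]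
  exact_mod_cast Complex.real_le_real.mpr hreal

/-- If `k ≥ 2` and the image of the multilinear map `φ : A_1 × ⋯ × A_k → ℝ/ℤ` contains an
element of order `q = p^n` (`p` prime, `n ≥ 1`), then `bias(φ) ≤ (n+1)^(k-2) / q`. -/
theorem bias_le_of_order (k : ℕ) (hk : 2 ≤ k) (A : Fin k → Type) [∀ i, AddCommGroup (A i)]
    [∀ i, Fintype (A i)] (φ : (∀ i, A i) → AddCircle (1 : ℝ)) (hφ : IsMultiadditive φ)
    (p n : ℕ) (hp : p.Prime) (hn : 1 ≤ n) (hord : ∃ x, addOrderOf (φ x) = p ^ n) :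
    bias φ ≤ ((((n + 1) ^ (k - 2) : ℕ) : ℝ) / ((p ^ n : ℕ) : ℝ) : ℂ) :=
  bias_le_of_order_general k hk A φ hφ p n hp hord
end

section
/- Let p be a prime, let A_1, …, A_k be finite abelian p-groups, and let q be a power of p. Let φ : pA_1 × A_2 × ⋯ × A_k → ℤ/qℤ be a multilinear map such that φ(x) = 0 whenever p·x_i = 0 for some i ∈ {2,…,k}. Then there exists a multilinear map ψ : A_1 × A_2 × ⋯ × A_k → ℤ/(pq)ℤ such that for all (y, x_2, …, x_k) ∈ pA_1 × A_2 × ⋯ × A_k one has ψ(y, x_2, …, x_k) = ι(φ(y, x_2, …, x_k)), where ι : ℤ/qℤ → ℤ/(pq)ℤ is the injective additive map identifying ℤ/qℤ with the subgroup p·(ℤ/(pq)ℤ), i.e. ι(a mod q) = pa mod pq. -/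
/-- The multiplication-by-`p` endomorphism of an abelian group. -/
def smulHom (p : ℕ) (A : Type) [AddCommGroup A] : A →+ A :=
  AddMonoidHom.mk' (fun a => p • a) (fun a b => smul_add p a b)

/-- The subgroup `pA = {pa : a ∈ A}` of an abelian group `A`. -/
def pSub (p : ℕ) (A : Type) [AddCommGroup A] : AddSubgroup A := (smulHom p A).range

/-- The family of groups `X, A_1, …, A_k`, indexed by `Option (Fin k)` (with `X` in
position `none`). -/
def optFam (X : Type) {k : ℕ} (A : Fin k → Type) : Option (Fin k) → Type :=
  fun o => o.elim X A

instance optFam.instAddCommGroup (X : Type) {k : ℕ} (A : Fin k → Type) [AddCommGroup X]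
    [∀ i, AddCommGroup (A i)] (o : Option (Fin k)) : AddCommGroup (optFam X A o) :=
  match o with
  | none => inferInstanceAs (AddCommGroup X)
  | some i => inferInstanceAs (AddCommGroup (A i))

instance optFam.instFintype (X : Type) {k : ℕ} (A : Fin k → Type) [Fintype X]
    [∀ i, Fintype (A i)] (o : Option (Fin k)) : Fintype (optFam X A o) :=
  match o with
  | none => inferInstanceAs (Fintype X)
  | some i => inferInstanceAs (Fintype (A i))

/-- The inclusion of `pA₀ × A_1 × ⋯ × A_k` into `A₀ × A_1 × ⋯ × A_k`. -/
def embOpt (p : ℕ) (A₀ : Type) [AddCommGroup A₀] {k : ℕ} (A : Fin k → Type)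
    (x : ∀ o, optFam (↥(pSub p A₀)) A o) : ∀ o, optFam A₀ A o :=
  fun o => match o with
  | none => (pSub p A₀).subtype (x none)
  | some i => x (some i)

/-!
Currying in one variable turns a multilinear map into an additive map from a finite abelian
`p`-group `G` into a group of multilinear maps, so everything reduces to lifting an additive map
`h : G → N` along some `π : N' → N` whose kernel is killed by `p`, where `h` takes values in the
image of `π` and kills `G[p]`. If `g` generates a cyclic summand of order `p^(m+1)`, then
`p^m g ∈ G[p]`, so any preimage `b` of `h g` satisfies `p^(m+1) b = 0` and `g ↦ b` extends to a
homomorphism. By induction on the number of variables, every multilinear map with values in the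
image of `π` that vanishes as soon as one argument is killed by `p` lifts along `π`.

Applied to `π = p • ·` on `ℤ/pq` and `χ(a, x) = ι(φ(pa, x))`, this gives a multilinear `ψ`
with `p ψ(a, x) = χ(a, x)`, hence `ψ(pa, x) = ι(φ(pa, x))`.
-/

theorem ZMod.exists_comp_eq_of_nsmul_eq_zero {N N' : Type*} [AddCommGroup N] [AddCommGroup N']
    {n : ℕ} (π : N' →+ N) (h : ZMod n →+ N) {b : N'} (hb : π b = h 1) (hnb : n • b = 0) :
    ∃ H : ZMod n →+ N', π.comp H = h := by
  refine ⟨ZMod.lift n ⟨zmultiplesHom N' b, by simpa using hnb⟩, ?_⟩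
  ext x
  obtain ⟨t, rfl⟩ := ZMod.intCast_surjective x
  rw [AddMonoidHom.comp_apply, ZMod.lift_coe, ← zsmul_one (R := ZMod n) t, map_zsmul]
  simp only [zmultiplesHom_apply, map_zsmul, hb]

theorem AddMonoidHom.exists_comp_eq_of_finite {G N N' : Type*} [AddCommGroup G] [Finite G]
    [AddCommGroup N] [AddCommGroup N'] (π : N' →+ N) (h : G →+ N)
    (hlift : ∀ g, ∃ b, π b = h g ∧ ∀ n : ℕ, n • g = 0 → n • b = 0) :
    ∃ H : G →+ N', π.comp H = h := by
  classical
  obtain ⟨ι, _, n, -, ⟨E⟩⟩ := AddCommGroup.equiv_directSum_zmod_of_finite' G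
  have hcyc : ∀ i, ∃ H : ZMod (n i) →+ N',
      π.comp H = (h.comp E.symm.toAddMonoidHom).comp (DirectSum.of _ i) := by
    intro i
    obtain ⟨b, hb, hnb⟩ := hlift (E.symm (DirectSum.of _ i 1))
    refine ZMod.exists_comp_eq_of_nsmul_eq_zero π _ hb (hnb _ ?_)
    rw [← map_nsmul, ← map_nsmul]
    simp
  choose H hH using hcyc
  refine ⟨(DirectSum.toAddMonoid H).comp E.toAddMonoidHom, ?_⟩
  have : π.comp (DirectSum.toAddMonoid H) = h.comp E.symm.toAddMonoidHom :=
    DirectSum.addHom_ext' fun i => by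
      ext x
      simpa using DFunLike.congr_fun (hH i) x
  ext g
  simpa using DFunLike.congr_fun this (E g)

theorem AddMonoidHom.exists_lift_of_pow_torsion {G N N' : Type*} [AddCommGroup G]
    [AddCommGroup N] [AddCommGroup N'] {p : ℕ} (hp : p.Prime) (π : N' →+ N)
    (hker : ∀ b, π b = 0 → p • b = 0) (h : G →+ N) (hrange : ∀ g, h g ∈ π.range)
    (htor : ∀ g, p • g = 0 → h g = 0) {g : G} (hg : ∃ m, p ^ m • g = 0) :
    ∃ b, π b = h g ∧ ∀ n : ℕ, n • g = 0 → n • b = 0 := by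
  obtain ⟨M, hM⟩ := hg
  obtain ⟨m, -, hm⟩ := (Nat.dvd_prime_pow hp).1 (addOrderOf_dvd_of_nsmul_eq_zero hM)
  obtain ⟨b, hb⟩ := hrange g
  cases m with
  | zero =>
    have : g = 0 := by simpa [hm] using (addOrderOf_nsmul_eq_zero g)
    exact ⟨0, by simp [this], fun _ _ => nsmul_zero _⟩
  | succ m =>
    have hpb : p ^ (m + 1) • b = 0 := by
      have : h (p ^ m • g) = 0 :=
        htor _ (by rw [smul_smul, ← pow_succ', ← hm, addOrderOf_nsmul_eq_zero])
      rw [pow_succ, mul_nsmul]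
      exact hker _ (by rw [map_nsmul, hb, ← map_nsmul, this])
    refine ⟨b, hb, fun n hn => ?_⟩
    obtain ⟨c, rfl⟩ := addOrderOf_dvd_of_nsmul_eq_zero hn
    rw [hm, mul_nsmul, hpb, nsmul_zero]

theorem AddMonoidHom.exists_comp_eq_of_pow_torsion {G N N' : Type*} [AddCommGroup G] [Finite G]
    [AddCommGroup N] [AddCommGroup N'] {p : ℕ} (hp : p.Prime) (hG : ∀ g : G, ∃ m, p ^ m • g = 0)
    (π : N' →+ N) (hker : ∀ b, π b = 0 → p • b = 0) (h : G →+ N) (hrange : ∀ g, h g ∈ π.range)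
    (htor : ∀ g, p • g = 0 → h g = 0) :
    ∃ H : G →+ N', π.comp H = h :=
  exists_comp_eq_of_finite π h fun g => exists_lift_of_pow_torsion hp π hker h hrange htor (hG g)

namespace MultilinearMap

variable {p : ℕ} {B B' : Type*} [AddCommGroup B] [AddCommGroup B']

theorem exists_compMultilinearMap_eq_of_fin (hp : p.Prime) (π : B' →+ B)
    (hker : ∀ b, π b = 0 → p • b = 0) {n : ℕ} {G : Fin n → Type*} [∀ i, AddCommGroup (G i)]
    [∀ i, Finite (G i)] (hG : ∀ i (g : G i), ∃ m, p ^ m • g = 0) (f : MultilinearMap ℤ G B)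
    (hrange : ∀ x, f x ∈ π.range) (hvan : ∀ x i, p • x i = 0 → f x = 0) :
    ∃ F : MultilinearMap ℤ G B', π.toIntLinearMap.compMultilinearMap F = f := by
  induction n with
  | zero =>
    obtain ⟨b, hb⟩ := hrange 0
    refine ⟨constOfIsEmpty ℤ G b, ext fun x => ?_⟩
    simp [hb, Subsingleton.elim x 0]
  | succ n ih =>
    let πc := (π.toIntLinearMap.compMultilinearMapₗ
      (M₁ := fun i : Fin n => G i.succ) ℤ).toAddMonoidHom
    obtain ⟨H, hH⟩ := AddMonoidHom.exists_comp_eq_of_pow_torsion hp (hG 0) πc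
      (fun F hF => ext fun x => hker _ (congr($hF x)))
      f.curryLeft.toAddMonoidHom
      (fun g => ih (fun i => hG i.succ) (f.curryLeft g) (fun x => hrange _)
        (fun x i hi => hvan _ i.succ (by simpa using hi)))
      (fun g hg => ext fun x => hvan _ 0 (by simpa using hg))
    refine ⟨H.toIntLinearMap.uncurryLeft, ext fun x => ?_⟩
    simpa [πc] using congr($hH (x 0) (Fin.tail x))

theorem exists_compMultilinearMap_eq (hp : p.Prime) (π : B' →+ B)
    (hker : ∀ b, π b = 0 → p • b = 0) {ι : Type*} [Fintype ι] {G : ι → Type*}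
    [∀ i, AddCommGroup (G i)] [∀ i, Finite (G i)] (hG : ∀ i (g : G i), ∃ m, p ^ m • g = 0)
    (f : MultilinearMap ℤ G B) (hrange : ∀ x, f x ∈ π.range)
    (hvan : ∀ x i, p • x i = 0 → f x = 0) :
    ∃ F : MultilinearMap ℤ G B', π.toIntLinearMap.compMultilinearMap F = f := by
  let σ := Fintype.equivFin ι
  obtain ⟨F, hF⟩ := exists_compMultilinearMap_eq_of_fin hp π hker (G := fun i => G (σ.symm i))
    (fun i => hG _) (domDomCongrLinearEquiv' ℤ ℤ G B σ f) (fun x => hrange _)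
    (fun x i hi => hvan _ (σ.symm i) (by simpa using hi))
  refine ⟨(domDomCongrLinearEquiv' ℤ ℤ G B' σ).symm F, ext fun x => ?_⟩
  simpa using congr($hF (σ.piCongrLeft' G x))

end MultilinearMap

def IsMultiadditive.toMultilinearMap {ι : Type} [DecidableEq ι] {A : ι → Type}
    [∀ i, AddCommGroup (A i)] {B : Type} [AddCommGroup B] {φ : (∀ i, A i) → B}
    (hφ : IsMultiadditive φ) : MultilinearMap ℤ A B :=
  MultilinearMap.mk' φ (fun m i => hφ i m) fun m i c x =>
    map_zsmul (AddMonoidHom.mk' (fun a => φ (Function.update m i a)) (hφ i m)) c x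

theorem MultilinearMap.isMultiadditive {ι : Type} [DecidableEq ι] {A : ι → Type}
    [∀ i, AddCommGroup (A i)] {B : Type} [AddCommGroup B] (f : MultilinearMap ℤ A B) :
    IsMultiadditive f :=
  fun i m => f.map_update_add m i

def ZMod.iota (p e : ℕ) [NeZero p] : ZMod (p ^ e) →+ ZMod (p ^ (e + 1)) :=
  AddMonoidHom.mk' (fun d => ((p * d.val : ℕ) : ZMod (p ^ (e + 1)))) fun a b => by
    rw [ZMod.val_add, ← Nat.cast_add, ← mul_add, ZMod.natCast_eq_natCast_iff, pow_succ']
    exact (Nat.mod_modEq _ _).mul_left' p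

theorem ZMod.iota_mem_range_smulHom (p e : ℕ) [NeZero p] (d : ZMod (p ^ e)) :
    ZMod.iota p e d ∈ (smulHom p (ZMod (p ^ (e + 1)))).range :=
  ⟨d.val, by simp [smulHom, ZMod.iota, nsmul_eq_mul]⟩

def optFam.smulNone (p : ℕ) (A₀ : Type) [AddCommGroup A₀] {k : ℕ} (A : Fin k → Type)
    [∀ i, AddCommGroup (A i)] : ∀ o, optFam A₀ A o →+ optFam (pSub p A₀) A o
  | none => (smulHom p A₀).rangeRestrict
  | some i => AddMonoidHom.id (A i)

theorem optFam.exists_smulNone_eq (p : ℕ) (A₀ : Type) [AddCommGroup A₀] {k : ℕ}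
    (A : Fin k → Type) [∀ i, AddCommGroup (A i)] (x : ∀ o, optFam (pSub p A₀) A o) :
    ∃ y : ∀ o, optFam A₀ A o, (fun o => smulNone p A₀ A o (y o)) = x ∧
      embOpt p A₀ A x = Function.update y none ((p : ℤ) • y none) := by
  obtain ⟨a, ha⟩ : ∃ a : optFam A₀ A none, smulHom p A₀ a = embOpt p A₀ A x none :=
    (x none).2
  refine ⟨Function.update (embOpt p A₀ A x) none a, funext fun o => ?_, ?_⟩
  · cases o with
    | none =>
      rw [Function.update_self]
      exact Subtype.ext ha
    | some i => rfl
  · rw [Function.update_idem, Function.update_self, eq_comm, Function.update_eq_self_iff,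
      natCast_zsmul]
    exact ha

/-- **Domain enlargement.** Let `A₀, A_1, …, A_k` be finite abelian `p`-groups and `q = p^e`.
If `φ : pA₀ × A_1 × ⋯ × A_k → ℤ/q` is a multilinear map vanishing whenever some `x_i`
(`i ≥ 1`) is killed by `p`, then there is a multilinear map
`ψ : A₀ × A_1 × ⋯ × A_k → ℤ/pq` with `ψ(y, x) = ι(φ(y, x))` for `y ∈ pA₀`, where
`ι : ℤ/q → ℤ/pq` is the injective additive map `a mod q ↦ pa mod pq`. -/
theorem domain_enlargement (p : ℕ) (hp : p.Prime) (e k : ℕ)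
    (A₀ : Type) [AddCommGroup A₀] [Fintype A₀] (hA₀ : ∀ a : A₀, ∃ m : ℕ, p ^ m • a = 0)
    (A : Fin k → Type) [∀ i, AddCommGroup (A i)] [∀ i, Fintype (A i)]
    (hA : ∀ i (a : A i), ∃ m : ℕ, p ^ m • a = 0)
    (φ : (∀ o, optFam (↥(pSub p A₀)) A o) → ZMod (p ^ e))
    (hφ : IsMultiadditive φ)
    (hvan : ∀ x, (∃ i : Fin k, p • x (some i) = 0) → φ x = 0) :
    ∃ ψ : (∀ o, optFam A₀ A o) → ZMod (p ^ (e + 1)),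
      IsMultiadditive ψ ∧
      ∀ x : ∀ o, optFam (↥(pSub p A₀)) A o,
        ψ (embOpt p A₀ A x) = ((p * (φ x).val : ℕ) : ZMod (p ^ (e + 1))) := by
  have : NeZero p := ⟨hp.ne_zero⟩
  let μ := (ZMod.iota p e).toIntLinearMap.compMultilinearMap
    (hφ.toMultilinearMap.compLinearMap fun o => (optFam.smulNone p A₀ A o).toIntLinearMap)
  have hμ : ∀ y, μ y = ZMod.iota p e (φ fun o => optFam.smulNone p A₀ A o (y o)) := fun _ => rfl
  have hμvan : ∀ y o, p • y o = 0 → μ y = 0 := by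
    rintro y (_ | i) hy
    · have h0 : optFam.smulNone p A₀ A none (y none) = 0 := Subtype.ext hy
      rw [hμ, show φ _ = 0 from hφ.toMultilinearMap.map_coord_zero none h0, map_zero]
    · rw [hμ, hvan _ ⟨i, hy⟩, map_zero]
  obtain ⟨F, hF⟩ := MultilinearMap.exists_compMultilinearMap_eq hp (smulHom p _)
    (fun _ hb => hb) (G := optFam A₀ A) (by rintro (_ | i); exacts [hA₀, hA i]) μ
    (fun y => ZMod.iota_mem_range_smulHom p e _) hμvan
  refine ⟨F, F.isMultiadditive, fun x => ?_⟩
  obtain ⟨y, rfl, hemb⟩ := optFam.exists_smulNone_eq p A₀ A x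
  rw [hemb, F.map_update_smul, Function.update_eq_self, natCast_zsmul]
  exact congr($hF y)
end

section
/- Let p be a prime, let A_1, …, A_k be finite abelian p-groups, and let q be a power of p. Let φ : A_1 × ⋯ × A_k → ℤ/qℤ be a multilinear map such that φ(x) = 0 whenever p·x_i = 0 for some i ∈ {1,…,k}. Then there exists a multilinear map ψ : A_1 × ⋯ × A_k → ℤ/(pq)ℤ such that π ∘ ψ = φ, where π : ℤ/(pq)ℤ → ℤ/qℤ is the reduction-mod-q map. -/
theorem isMultiadditive_iff_exists_multilinearMap {ι : Type} [DecidableEq ι] {A : ι → Type}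
    [∀ i, AddCommGroup (A i)] {B : Type} [AddCommGroup B] {φ : (∀ i, A i) → B} :
    IsMultiadditive φ ↔ ∃ f : MultilinearMap ℤ A B, ⇑f = φ := by
  constructor
  · intro hφ
    let slice (x : ∀ i, A i) (i : ι) : A i →+ B :=
      AddMonoidHom.mk' (fun a ↦ φ (Function.update x i a)) (hφ i x)
    exact ⟨.mk' φ (fun x i ↦ hφ i x) fun x i c a ↦ (slice x i).map_zsmul c a, rfl⟩
  · rintro ⟨f, rfl⟩ i x a b
    exact f.map_update_add x i a b

theorem ZMod.nsmul_eq_zero_of_castHom_eq_zero {m n p : ℕ} (hmn : m ∣ n) (hn : n ∣ p * m)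
    {z : ZMod n} (hz : ZMod.castHom hmn (ZMod m) z = 0) : p • z = 0 := by
  obtain ⟨t, rfl⟩ := ZMod.intCast_surjective z
  rw [map_intCast, ZMod.intCast_zmod_eq_zero_iff_dvd] at hz
  rw [nsmul_eq_mul, ← Int.cast_natCast, ← Int.cast_mul, ZMod.intCast_zmod_eq_zero_iff_dvd]
  exact (Int.natCast_dvd_natCast.2 hn).trans (by push_cast; exact mul_dvd_mul_left _ hz)

section Lift

variable {A V W : Type*} [AddCommGroup A] [AddCommGroup V] [AddCommGroup W] {p : ℕ}

theorem exists_lift_nsmul_eq_zero (r : W →+ V) (hker : ∀ w, r w = 0 → p • w = 0) (F : A →+ V)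
    (hFtor : ∀ a, p • a = 0 → F a = 0) (hlift : ∀ a, F a ∈ r.range) {a : A} {n : ℕ}
    (ha : p ^ n • a = 0) : ∃ w, r w = F a ∧ p ^ n • w = 0 := by
  cases n with
  | zero => exact ⟨0, by simp_all⟩
  | succ n =>
    obtain ⟨w, hw⟩ := hlift a
    refine ⟨w, hw, ?_⟩
    have hpa : F (p ^ n • a) = 0 := hFtor _ (by rwa [smul_smul, ← pow_succ'])
    have := hker (p ^ n • w) (by rw [map_nsmul, hw, ← map_nsmul, hpa])
    rwa [smul_smul, ← pow_succ'] at this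

theorem DirectSum.exists_lift_zmod {ι : Type*} [DecidableEq ι] {N : ι → ℕ} (r : W →+ V)
    (F : (DirectSum ι fun i ↦ ZMod (N i)) →+ V)
    (h : ∀ i, ∃ w, r w = F (DirectSum.of _ i 1) ∧ N i • w = 0) :
    ∃ G : (DirectSum ι fun i ↦ ZMod (N i)) →+ W, r.comp G = F := by
  choose w hw hNw using h
  refine ⟨DirectSum.toAddMonoid fun i ↦
    ZMod.lift (N i) ⟨zmultiplesHom W (w i), by simpa [natCast_zsmul] using hNw i⟩, ?_⟩
  refine DirectSum.addHom_ext fun i y ↦ ?_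
  obtain ⟨t, rfl⟩ := ZMod.intCast_surjective y
  simp only [AddMonoidHom.comp_apply, DirectSum.toAddMonoid_of, ZMod.lift_coe,
    zmultiplesHom_apply, map_zsmul, hw]
  rw [← map_zsmul, ← map_zsmul, zsmul_one]

theorem exists_lift_of_finite [Finite A] (hp : p.Prime) (hA : ∀ a : A, ∃ m, p ^ m • a = 0)
    (r : W →+ V) (hker : ∀ w, r w = 0 → p • w = 0) (F : A →+ V)
    (hFtor : ∀ a, p • a = 0 → F a = 0) (hlift : ∀ a, F a ∈ r.range) :
    ∃ G : A →+ W, r.comp G = F := by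
  classical
  obtain ⟨ι, _, q, -, n, ⟨eqv⟩⟩ := AddCommGroup.equiv_directSum_zmod_of_finite A
  suffices ∃ G, r.comp G = F.comp eqv.symm.toAddMonoidHom by
    obtain ⟨G, hG⟩ := this
    refine ⟨G.comp eqv.toAddMonoidHom, AddMonoidHom.ext fun a ↦ ?_⟩
    simpa using DFunLike.congr_fun hG (eqv a)
  refine DirectSum.exists_lift_zmod r _ fun i ↦ ?_
  set g := eqv.symm (DirectSum.of _ i 1)
  obtain ⟨m, hm⟩ := hA g
  obtain ⟨j, -, hj⟩ := (Nat.dvd_prime_pow hp).1 (addOrderOf_dvd_of_nsmul_eq_zero hm)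
  obtain ⟨w, hw, hjw⟩ :=
    exists_lift_nsmul_eq_zero r hker F hFtor hlift (hj ▸ addOrderOf_nsmul_eq_zero g)
  refine ⟨w, hw, ?_⟩
  have hNg : (q i ^ n i) • g = 0 := by
    simp [g, ← map_nsmul, ← DirectSum.of_smul]
  obtain ⟨c, hc⟩ := hj ▸ addOrderOf_dvd_of_nsmul_eq_zero hNg
  rw [hc, mul_nsmul, hjw, nsmul_zero]

end Lift

theorem MultilinearMap.exists_lift_zmod_pow_succ {p e : ℕ} (hp : p.Prime) {k : ℕ}
    (A : Fin k → Type) [∀ i, AddCommGroup (A i)] [∀ i, Finite (A i)]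
    (hA : ∀ i (a : A i), ∃ m, p ^ m • a = 0) (φ : MultilinearMap ℤ A (ZMod (p ^ e)))
    (hvan : ∀ x, (∃ i, p • x i = 0) → φ x = 0) :
    ∃ ψ : MultilinearMap ℤ A (ZMod (p ^ (e + 1))),
      ∀ x, ZMod.castHom (pow_dvd_pow p e.le_succ) (ZMod (p ^ e)) (ψ x) = φ x := by
  induction k with
  | zero =>
    obtain ⟨c, hc⟩ := ZMod.castHom_surjective (pow_dvd_pow p e.le_succ) (φ 0)
    exact ⟨MultilinearMap.constOfIsEmpty ℤ A c, fun x ↦ by rwa [Subsingleton.elim x 0]⟩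
  | succ k ih =>
    let π := (ZMod.castHom (pow_dvd_pow p e.le_succ) (ZMod (p ^ e))).toAddMonoidHom.toIntLinearMap
    let r := (π.compMultilinearMapₗ (M₁ := fun i : Fin k ↦ A i.succ) ℤ).toAddMonoidHom
    have hker : ∀ w, r w = 0 → p • w = 0 := fun w hw ↦ MultilinearMap.ext fun x ↦
      ZMod.nsmul_eq_zero_of_castHom_eq_zero (pow_dvd_pow p e.le_succ) (pow_succ' p e).dvd
        (congrArg (· x) hw :)
    have hFtor : ∀ a, p • a = 0 → φ.curryLeft a = 0 := fun a ha ↦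
      MultilinearMap.ext fun x ↦ hvan _ ⟨0, by simpa using ha⟩
    have hlift : ∀ a, φ.curryLeft.toAddMonoidHom a ∈ r.range := fun a ↦ by
      obtain ⟨ψ, hψ⟩ := ih (fun i ↦ A i.succ) (fun i ↦ hA i.succ) (φ.curryLeft a)
        fun x ⟨i, hi⟩ ↦ hvan _ ⟨i.succ, by simpa using hi⟩
      exact ⟨ψ, MultilinearMap.ext hψ⟩
    obtain ⟨G, hG⟩ := exists_lift_of_finite hp (hA 0) r hker _ hFtor hlift
    refine ⟨G.toIntLinearMap.uncurryLeft, fun x ↦ ?_⟩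
    simpa [r, π] using congrArg (· (Fin.tail x)) (DFunLike.congr_fun hG (x 0))

/-- **Range enlargement.** If `A_1, …, A_k` are finite abelian `p`-groups, `q = p^e`, and
`φ : A_1 × ⋯ × A_k → ℤ/q` is a multilinear map vanishing whenever some `x_i` is killed by `p`,
then `φ` lifts to a multilinear map `ψ : A_1 × ⋯ × A_k → ℤ/pq` with `ψ mod q = φ`. -/
theorem range_enlargement (p : ℕ) (hp : p.Prime) (e k : ℕ)
    (A : Fin k → Type) [∀ i, AddCommGroup (A i)] [∀ i, Fintype (A i)]
    (hA : ∀ i (a : A i), ∃ m : ℕ, p ^ m • a = 0)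
    (φ : (∀ i, A i) → ZMod (p ^ e)) (hφ : IsMultiadditive φ)
    (hvan : ∀ x : ∀ i, A i, (∃ i, p • x i = 0) → φ x = 0) :
    ∃ ψ : (∀ i, A i) → ZMod (p ^ (e + 1)),
      IsMultiadditive ψ ∧
      ∀ x, ZMod.castHom (pow_dvd_pow p e.le_succ) (ZMod (p ^ e)) (ψ x) = φ x := by
  obtain ⟨f, rfl⟩ := isMultiadditive_iff_exists_multilinearMap.1 hφ
  obtain ⟨ψ, hψ⟩ := f.exists_lift_zmod_pow_succ hp A hA hvan
  exact ⟨ψ, isMultiadditive_iff_exists_multilinearMap.2 ⟨ψ, rfl⟩, hψ⟩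
end
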